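/- arXiv:2403.00497 — 6 statements merged into one kernel-verified Lean document; each statement's English description precedes it below -/
import Mathlib

section
/- Let r ≥ 1 be an integer and let G be a connected simple graph in which every edge lies in a triangle. Then G admits a graph homomorphism to the complete graph K_3 if and only if the (5^r − 1)-subdivision G^{5^r−1} admits a graph homomorphism to the cycle C_{3·5^r}. -/
/-!
Given a 3-colouring `c`, send a branch vertex `u` to `m · c u` in `ℤ/3m` (with `m = 5^r`) and
let each subdivided edge `uv`, a path of length `m`, walk monotonically from `m · c u` to
`m · c v`. Conversely, along a subdivided edge a homomorphism to `C_{3m}` moves by an integer of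
absolute value at most `m` and of the parity of `m`, i.e. odd. Around a triangle of `G` the three
displacements sum to an odd multiple of `3m` of absolute value at most `3m`, so each is `± m`;
as `3 ∤ m`, reducing the images of the branch vertices modulo `3` gives a 3-colouring.
-/

/-- Representatives of internal vertices of the `k`-subdivision of `G`:
a dart `d` of `G` together with a position `i : Fin k`; the pair `(d, i)` is
identified with `(d.symm, k - 1 - i)`. -/
def SubdivRep {V : Type*} (G : SimpleGraph V) (k : ℕ) :
    G.Dart × Fin k → G.Dart × Fin k → Prop :=
  fun a b => b.1 = a.1.symm ∧ (b.2 : ℕ) = k - 1 - (a.2 : ℕ)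

/-- Internal vertices of the `k`-subdivision of `G`. -/
abbrev SubdivInternal {V : Type*} (G : SimpleGraph V) (k : ℕ) :=
  Quot (SubdivRep G k)

/-- Vertices of the `k`-subdivision of `G`: the branch vertices (`Sum.inl`)
are the original vertices of `G`, and `Sum.inr` are the internal vertices. -/
abbrev SubdivVertex {V : Type*} (G : SimpleGraph V) (k : ℕ) :=
  V ⊕ SubdivInternal G k

/-- One-directional adjacency for the `k`-subdivision: a branch vertex `u` is
adjacent to the first internal vertex of any edge of `G` leaving `u` (via the
identification, also to the last internal vertex of any edge entering `u`),
and consecutive internal vertices on a subdivided edge are adjacent. -/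
def SubdivAdjBase {V : Type*} (G : SimpleGraph V) (k : ℕ) :
    SubdivVertex G k → SubdivVertex G k → Prop
  | Sum.inl u, Sum.inr x =>
      ∃ (d : G.Dart) (i : Fin k), (i : ℕ) = 0 ∧ d.toProd.1 = u ∧
        x = Quot.mk (SubdivRep G k) (d, i)
  | Sum.inr x, Sum.inr y =>
      ∃ (d : G.Dart) (i j : Fin k), (j : ℕ) = (i : ℕ) + 1 ∧
        x = Quot.mk (SubdivRep G k) (d, i) ∧ y = Quot.mk (SubdivRep G k) (d, j)
  | _, _ => False

/-- The `k`-subdivision of a simple graph `G`: every edge `uv` of `G` is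
replaced by a path from `u` to `v` through `k` new internal vertices. -/
def Subdivision {V : Type*} (G : SimpleGraph V) (k : ℕ) :
    SimpleGraph (SubdivVertex G k) where
  Adj x y := x ≠ y ∧ (SubdivAdjBase G k x y ∨ SubdivAdjBase G k y x)
  symm := ⟨fun x y h => ⟨Ne.symm h.1, h.2.symm⟩⟩
  loopless := ⟨fun x h => h.1 rfl⟩

/-- The cycle `C_n` with vertex set `ZMod n`, where `j` is adjacent to `j + 1`. -/
def cycleZMod (n : ℕ) : SimpleGraph (ZMod n) where
  Adj i j := i ≠ j ∧ (j = i + 1 ∨ i = j + 1)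
  symm := ⟨fun i j h => ⟨Ne.symm h.1, h.2.symm⟩⟩
  loopless := ⟨fun i h => h.1 rfl⟩

open SimpleGraph

namespace cycleZMod

lemma adj_add_intCast {n : ℕ} (hn : n ≠ 1) (x : ZMod n) {e : ℤ} (he : e = 1 ∨ e = -1) :
    (cycleZMod n).Adj x (x + e) := by
  have : Nontrivial (ZMod n) := ZMod.nontrivial_iff.mpr hn
  rcases he with rfl | rfl
  · exact ⟨by simp, Or.inl (by simp)⟩
  · exact ⟨by simp, Or.inr (by simp)⟩

lemma exists_intCast_of_adj {n : ℕ} {x y : ZMod n} (h : (cycleZMod n).Adj x y) :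
    ∃ e : ℤ, (e = 1 ∨ e = -1) ∧ y = x + e := by
  rcases h.2 with rfl | rfl
  · exact ⟨1, Or.inl rfl, by simp⟩
  · exact ⟨-1, Or.inr rfl, by simp⟩

lemma exists_intCast_of_chain {n : ℕ} (p : ℕ → ZMod n) :
    ∀ l : ℕ, (∀ j < l, (cycleZMod n).Adj (p j) (p (j + 1))) →
      ∃ a : ℤ, a.natAbs ≤ l ∧ a % 2 = l % 2 ∧ p l = p 0 + a
  | 0, _ => ⟨0, by simp⟩
  | l + 1, hp => by
    obtain ⟨a, ha, ha2, hpa⟩ := exists_intCast_of_chain p l fun j hj => hp j (by omega)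
    obtain ⟨e, he, hpe⟩ := exists_intCast_of_adj (hp l (by omega))
    refine ⟨a + e, by omega, by omega, ?_⟩
    rw [hpe, hpa]
    push_cast
    ring

end cycleZMod

namespace Subdivision

variable {V : Type*} {G : SimpleGraph V} {k : ℕ}

def labelledEnds : SubdivInternal G k → Sym2 (V × ℕ) :=
  Quot.lift (fun p => s((p.1.fst, (p.2 : ℕ)), (p.1.snd, k - 1 - (p.2 : ℕ))))
    (by
      rintro ⟨d, i⟩ ⟨d', j⟩ ⟨rfl, hj⟩
      have : k - 1 - (k - 1 - (i : ℕ)) = i := by omega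
      simp only at hj ⊢
      rw [hj, this]
      exact Sym2.eq_swap)

lemma mk_inj {d : G.Dart} {i j : Fin k} :
    Quot.mk (SubdivRep G k) (d, i) = Quot.mk (SubdivRep G k) (d, j) ↔ i = j := by
  refine ⟨fun h => ?_, fun h => h ▸ rfl⟩
  have h := congrArg labelledEnds h
  simp only [labelledEnds, Sym2.eq_iff, Prod.mk.injEq] at h
  rcases h with ⟨⟨-, h⟩, -⟩ | ⟨⟨h, -⟩, -⟩
  · exact Fin.ext h
  · exact absurd h d.fst_ne_snd

def dartPath (d : G.Dart) (j : ℕ) : SubdivVertex G k :=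
  if h0 : j = 0 then Sum.inl d.fst
  else if h : j ≤ k then Sum.inr (Quot.mk _ (d, ⟨j - 1, by omega⟩)) else Sum.inl d.snd

lemma dartPath_zero (d : G.Dart) : dartPath (k := k) d 0 = Sum.inl d.fst := rfl

lemma dartPath_of_pos_of_le (d : G.Dart) {j : ℕ} (hj0 : 0 < j) (hj : j ≤ k) :
    dartPath d j = Sum.inr (Quot.mk (SubdivRep G k) (d, ⟨j - 1, by omega⟩)) := by
  simp [dartPath, hj0.ne', hj]

lemma dartPath_succ (d : G.Dart) : dartPath (k := k) d (k + 1) = Sum.inl d.snd := by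
  simp [dartPath]

lemma dartPath_adj (hk : 0 < k) (d : G.Dart) {j : ℕ} (hj : j ≤ k) :
    (Subdivision G k).Adj (dartPath d j) (dartPath d (j + 1)) := by
  rcases Nat.eq_zero_or_pos j with rfl | hj0
  · rw [zero_add, dartPath_zero, dartPath_of_pos_of_le d one_pos hk]
    exact ⟨Sum.inl_ne_inr, Or.inl ⟨d, _, rfl, rfl, rfl⟩⟩
  rcases Nat.lt_or_eq_of_le hj with hjk | rfl
  · rw [dartPath_of_pos_of_le d hj0 hj, dartPath_of_pos_of_le d j.succ_pos hjk]
    refine ⟨fun h => ?_, Or.inl ⟨d, _, _, show j = j - 1 + 1 by omega, rfl, rfl⟩⟩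
    have := Fin.mk.inj_iff.mp (mk_inj.mp (Sum.inr_injective h))
    omega
  · have hlast : Quot.mk (SubdivRep G j) (d, ⟨j - 1, by omega⟩) =
        Quot.mk (SubdivRep G j) (d.symm, ⟨0, hk⟩) := Quot.sound ⟨rfl, by simp⟩
    rw [dartPath_of_pos_of_le d hj0 le_rfl, dartPath_succ, hlast]
    exact ⟨Sum.inr_ne_inl, Or.inr ⟨d.symm, _, rfl, rfl, rfl⟩⟩

lemma exists_intCast_of_hom {n : ℕ} (hk : 0 < k) (g : Subdivision G k →g cycleZMod n)
    (d : G.Dart) :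
    ∃ a : ℤ, a.natAbs ≤ k + 1 ∧ a % 2 = (k + 1) % 2 ∧
      g (Sum.inl d.snd) = g (Sum.inl d.fst) + a := by
  obtain ⟨a, ha, ha2, hga⟩ := cycleZMod.exists_intCast_of_chain (g ∘ dartPath d) (k + 1)
    fun j hj => g.map_adj (dartPath_adj hk d (by omega))
  refine ⟨a, ha, by exact_mod_cast ha2, ?_⟩
  simpa [dartPath_zero, dartPath_succ] using hga

def homMk {W : Type*} {H : SimpleGraph W} (φ : SubdivVertex G k → W)
    (hφ : ∀ x y, SubdivAdjBase G k x y → H.Adj (φ x) (φ y)) : Subdivision G k →g H where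
  toFun := φ
  map_rel' := by
    rintro x y ⟨-, h | h⟩
    exacts [hφ x y h, (hφ y x h).symm]

end Subdivision

def triangleStep (a b : Fin 3) : ℤ := if b = a + 1 then 1 else -1

lemma triangleStep_eq_one_or_eq_neg_one (a b : Fin 3) :
    triangleStep a b = 1 ∨ triangleStep a b = -1 := by
  unfold triangleStep
  split_ifs <;> simp

lemma triangleStep_swap {a b : Fin 3} (hab : a ≠ b) : triangleStep b a = -triangleStep a b := by
  revert a b
  decide

lemma three_dvd_sub_triangleStep {a b : Fin 3} (hab : a ≠ b) :
    (3 : ℤ) ∣ (b : ℤ) - a - triangleStep a b := by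
  revert a b
  decide

section

variable {V : Type*} {G : SimpleGraph V}

def subdivisionHomOfColoring (m : ℕ) (c : G →g completeGraph (Fin 3)) :
    Subdivision G (m - 1) →g cycleZMod (3 * m) :=
  Subdivision.homMk
    (Sum.elim (fun u => ((m * (c u : ℕ) : ℤ) : ZMod (3 * m)))
      (Quot.lift (fun p => ((m * (c p.1.fst : ℕ) + triangleStep (c p.1.fst) (c p.1.snd) *
          ((p.2 : ℕ) + 1) : ℤ) : ZMod (3 * m)))
        (by
          rintro ⟨d, i⟩ ⟨d', j⟩ ⟨rfl, hj⟩
          have hne : c d.fst ≠ c d.snd := c.map_adj d.adj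
          obtain ⟨s, hs⟩ := three_dvd_sub_triangleStep hne
          have hij : ((j : ℕ) : ℤ) + 1 + ((i : ℕ) + 1) = m := by
            simp only at hj
            omega
          simp only [Dart.symm_toProd, Prod.fst_swap, Prod.snd_swap, triangleStep_swap hne]
          rw [ZMod.intCast_eq_intCast_iff_dvd_sub]
          exact ⟨s, by push_cast; linear_combination (m : ℤ) * hs - triangleStep _ _ * hij⟩)))
    (by
      have hm : 3 * m ≠ 1 := by omega
      rintro (u | x) (v | y) h
      · exact h.elim
      · obtain ⟨d, i, hi, rfl, rfl⟩ := h
        convert cycleZMod.adj_add_intCast hm _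
          (triangleStep_eq_one_or_eq_neg_one (c d.fst) (c d.snd)) using 1
        simp [hi]
      · exact h.elim
      · obtain ⟨d, i, j, hij, rfl, rfl⟩ := h
        convert cycleZMod.adj_add_intCast hm _
          (triangleStep_eq_one_or_eq_neg_one (c d.fst) (c d.snd)) using 1
        simp only [Sum.elim_inr, hij]
        push_cast
        ring)

end

lemma natAbs_eq_of_three_mul_dvd_add_add {m : ℕ} {a b c : ℤ} (ha : a.natAbs ≤ m)
    (hb : b.natAbs ≤ m) (hc : c.natAbs ≤ m) (ha2 : a % 2 = 1) (hb2 : b % 2 = 1)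
    (hc2 : c % 2 = 1) (hdvd : (3 * m : ℤ) ∣ a + b + c) : a.natAbs = m := by
  obtain ⟨t, ht⟩ := hdvd
  rcases lt_trichotomy t 0 with ht0 | rfl | ht0
  · have : 3 * (m : ℤ) * t ≤ -(3 * m) := by nlinarith
    omega
  · omega
  · have : 3 * (m : ℤ) ≤ 3 * m * t := by nlinarith
    omega

section

variable {V : Type*} {G : SimpleGraph V}

lemma exists_natAbs_eq_of_hom_subdivision_cycle {m : ℕ} (hm1 : 1 < m) (hodd : Odd m)
    (htri : ∀ u v : V, G.Adj u v → ∃ z : V, G.Adj u z ∧ G.Adj v z)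
    (g : Subdivision G (m - 1) →g cycleZMod (3 * m)) {u v : V} (huv : G.Adj u v) :
    ∃ a : ℤ, a.natAbs = m ∧ g (Sum.inl v) = g (Sum.inl u) + a := by
  have hm2 : (m : ℤ) % 2 = 1 := by exact_mod_cast Nat.odd_iff.mp hodd
  obtain ⟨z, huz, hvz⟩ := htri u v huv
  obtain ⟨a, ha, ha2, hga⟩ := Subdivision.exists_intCast_of_hom (by omega) g ⟨(u, v), huv⟩
  obtain ⟨b, hb, hb2, hgb⟩ := Subdivision.exists_intCast_of_hom (by omega) g ⟨(v, z), hvz⟩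
  obtain ⟨c, hc, hc2, hgc⟩ := Subdivision.exists_intCast_of_hom (by omega) g ⟨(z, u), huz.symm⟩
  have hsum : ((a + b + c : ℤ) : ZMod (3 * m)) = 0 := by
    simp only at hga hgb hgc
    push_cast
    linear_combination -hga - hgb - hgc
  rw [ZMod.intCast_zmod_eq_zero_iff_dvd] at hsum
  have hk : m - 1 + 1 = m := by omega
  rw [hk] at ha hb hc
  push_cast at hsum
  exact ⟨a, natAbs_eq_of_three_mul_dvd_add_add ha hb hc (by omega) (by omega) (by omega) hsum,
    hga⟩

def coloringOfHomSubdivisionCycle {m : ℕ} (hm1 : 1 < m) (hodd : Odd m) (h3 : ¬ 3 ∣ m)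
    (htri : ∀ u v : V, G.Adj u v → ∃ z : V, G.Adj u z ∧ G.Adj v z)
    (g : Subdivision G (m - 1) →g cycleZMod (3 * m)) : G →g completeGraph (Fin 3) where
  toFun u := ZMod.castHom (dvd_mul_right 3 m) (ZMod 3) (g (Sum.inl u))
  map_rel' {u v} huv := by
    obtain ⟨a, ha, hga⟩ := exists_natAbs_eq_of_hom_subdivision_cycle hm1 hodd htri g huv
    refine (top_adj _ _).mpr fun h => h3 ?_
    have h : (a : ZMod 3) = 0 := by
      rw [hga, map_add, map_intCast] at h
      exact left_eq_add.mp h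
    rw [ZMod.intCast_zmod_eq_zero_iff_dvd] at h
    exact ha ▸ Int.natCast_dvd.mp h

end

theorem statement0_general {V : Type*} (r : ℕ) (hr : 1 ≤ r) (G : SimpleGraph V)
    (htri : ∀ u v : V, G.Adj u v → ∃ z : V, G.Adj u z ∧ G.Adj v z) :
    Nonempty (G →g SimpleGraph.completeGraph (Fin 3)) ↔
      Nonempty (Subdivision G (5 ^ r - 1) →g cycleZMod (3 * 5 ^ r)) := by
  have h1 : 1 < 5 ^ r := Nat.one_lt_pow (by omega) (by norm_num)
  have hodd : Odd (5 ^ r) := Odd.pow (by decide)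
  have h3 : ¬ 3 ∣ 5 ^ r := fun h => by
    have := Nat.prime_three.dvd_of_dvd_pow h
    norm_num at this
  exact ⟨fun ⟨c⟩ => ⟨subdivisionHomOfColoring (5 ^ r) c⟩,
    fun ⟨g⟩ => ⟨coloringOfHomSubdivisionCycle h1 hodd h3 htri g⟩⟩

/-- Let `r ≥ 1` and let `G` be a connected graph in which every edge lies in a
triangle.  Then `G → K₃` if and only if `G^{5^r - 1} → C_{3·5^r}`. -/
theorem statement0 {V : Type*} (r : ℕ) (hr : 1 ≤ r) (G : SimpleGraph V)
    (hconn : G.Connected)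
    (htri : ∀ u v : V, G.Adj u v → ∃ z : V, G.Adj u z ∧ G.Adj v z) :
    Nonempty (G →g SimpleGraph.completeGraph (Fin 3)) ↔
      Nonempty (Subdivision G (5 ^ r - 1) →g cycleZMod (3 * 5 ^ r)) :=
  statement0_general r hr G htri
end

section
/- Let r ≥ 1 be an integer, let G be a connected simple graph in which every edge lies in a triangle, and let h be a graph homomorphism from the (5^r − 1)-subdivision G^{5^r−1} to the cycle C_{3·5^r}, whose vertices are identified with ℤ/(3·5^r)ℤ with j adjacent to j+1. Then there exists i ∈ ℤ/(3·5^r)ℤ such that h maps every branch vertex of G^{5^r−1} into the set {i, i + 5^r, i + 2·5^r}. -/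
/-!
A subdivided edge of `G^{m-1}` is a path of length `m`, so `h` moves its endpoints by an integer
`s` with `|s| ≤ m` and `s ≡ m (mod 2)`. Around a triangle of `G` the three displacements add up
to a multiple of `3m`; for odd `m` the sum is odd, hence nonzero, which forces every displacement
to be `±m`. Thus `h` is constant modulo `m` along the edges of `G`, hence on all branch vertices by
connectivity, and the residues mod `3m` of a single class mod `m` are `i, i + m, i + 2m`.
-/

open SimpleGraph

theorem SimpleGraph.Reachable.eq_of_forall_adj {V β : Type*} {G : SimpleGraph V} {f : V → β}
    (hf : ∀ u v, G.Adj u v → f u = f v) {u v : V} (huv : G.Reachable u v) : f u = f v := by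
  obtain ⟨p⟩ := huv
  induction p with
  | nil => rfl
  | cons ha _ ih => exact (hf _ _ ha).trans ih

namespace Subdivision

variable {V : Type*} {G : SimpleGraph V} {k : ℕ}

/-- Separates the internal vertices of a subdivided edge: the ends of the edge, each labelled by
the position of the vertex counted from that end. -/
def internalEnds : SubdivInternal G k → Sym2 (V × ℕ) :=
  Quot.lift (fun a => s((a.1.fst, (a.2 : ℕ)), (a.1.snd, k - 1 - a.2))) <| by
    rintro ⟨d, i⟩ ⟨d', j⟩ ⟨rfl, hj : (j : ℕ) = k - 1 - i⟩
    have hi := i.isLt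
    simp only [Dart.symm_toProd, Prod.fst_swap, Prod.snd_swap, hj]
    rw [Sym2.eq_swap, show k - 1 - (k - 1 - (i : ℕ)) = i by omega]

theorem mk_ne_mk (d : G.Dart) {i j : Fin k} (hij : i ≠ j) :
    Quot.mk (SubdivRep G k) (d, i) ≠ Quot.mk (SubdivRep G k) (d, j) := by
  intro heq
  rcases Sym2.eq_iff.mp (congrArg internalEnds heq) with ⟨hi, -⟩ | ⟨hd, -⟩
  · exact hij (Fin.ext (Prod.ext_iff.mp hi).2)
  · exact d.adj.ne (Prod.ext_iff.mp hd).1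

theorem adj_first (d : G.Dart) (hk : 0 < k) :
    (Subdivision G k).Adj (Sum.inl d.fst) (Sum.inr (Quot.mk _ (d, ⟨0, hk⟩))) :=
  ⟨Sum.inl_ne_inr, Or.inl ⟨d, ⟨0, hk⟩, rfl, rfl, rfl⟩⟩

theorem adj_succ (d : G.Dart) {i : ℕ} (hi : i + 1 < k) :
    (Subdivision G k).Adj (Sum.inr (Quot.mk _ (d, ⟨i, by omega⟩)))
      (Sum.inr (Quot.mk _ (d, ⟨i + 1, hi⟩))) :=
  ⟨fun heq => mk_ne_mk d (by simp) (Sum.inr.inj heq), Or.inl ⟨d, _, _, rfl, rfl, rfl⟩⟩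

theorem adj_last (d : G.Dart) (hk : 0 < k) :
    (Subdivision G k).Adj (Sum.inl d.snd) (Sum.inr (Quot.mk _ (d, ⟨k - 1, by omega⟩))) := by
  have hsymm : Quot.mk (SubdivRep G k) (d.symm, ⟨0, hk⟩) = Quot.mk _ (d, ⟨k - 1, by omega⟩) :=
    Quot.sound ⟨d.symm_symm.symm, by simp⟩
  simpa [hsymm] using adj_first d.symm hk

end Subdivision

def ZMod.IsDisplacement {n : ℕ} (L : ℕ) (a b : ZMod n) : Prop :=
  ∃ s : ℤ, s.natAbs ≤ L ∧ Even (s + L) ∧ b = a + s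

namespace ZMod.IsDisplacement

variable {n L : ℕ} {a b c : ZMod n}

theorem refl (a : ZMod n) : IsDisplacement 0 a a :=
  ⟨0, le_rfl, by simp, by simp⟩

theorem step (hab : IsDisplacement L a b) (hbc : (cycleZMod n).Adj b c) :
    IsDisplacement (L + 1) a c := by
  obtain ⟨s, hs, ⟨t, ht⟩, rfl⟩ := hab
  obtain ⟨-, rfl | hcb⟩ := hbc
  · exact ⟨s + 1, by omega, ⟨t + 1, by push_cast; omega⟩, by push_cast; ring⟩
  · refine ⟨s - 1, by omega, ⟨t, by push_cast; omega⟩, ?_⟩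
    push_cast
    linear_combination -hcb

end ZMod.IsDisplacement

theorem Subdivision.isDisplacement_fst_snd {V : Type*} {G : SimpleGraph V} {k n : ℕ}
    (hk : 0 < k) (h : Subdivision G k →g cycleZMod n) (d : G.Dart) :
    ZMod.IsDisplacement (k + 1) (h (Sum.inl d.fst)) (h (Sum.inl d.snd)) := by
  have hinternal : ∀ i (hi : i < k), ZMod.IsDisplacement (i + 1) (h (Sum.inl d.fst))
      (h (Sum.inr (Quot.mk _ (d, ⟨i, hi⟩)))) := by
    intro i
    induction i with
    | zero => exact fun hk => (ZMod.IsDisplacement.refl _).step (h.map_adj (adj_first d hk))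
    | succ i ih => exact fun hi => (ih (by omega)).step (h.map_adj (adj_succ d hi))
  have hend := (hinternal (k - 1) (by omega)).step (h.map_adj (adj_last d hk)).symm
  rwa [Nat.sub_add_cancel hk] at hend

theorem Int.natAbs_eq_of_three_mul_dvd_add {m : ℕ} {a b c : ℤ} (ha : a.natAbs ≤ m)
    (hb : b.natAbs ≤ m) (hc : c.natAbs ≤ m) (hodd : Odd (a + b + c))
    (hdvd : 3 * (m : ℤ) ∣ a + b + c) : a.natAbs = m := by
  obtain ⟨q, hq⟩ := hdvd
  obtain ⟨t, ht⟩ := hodd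
  have hq0 : q ≠ 0 := by rintro rfl; omega
  rcases lt_or_gt_of_ne hq0 with hneg | hpos
  · have : 3 * (m : ℤ) * q ≤ -(3 * m) := by nlinarith
    omega
  · have : 3 * (m : ℤ) * q ≥ 3 * m := by nlinarith
    omega

theorem ZMod.castHom_eq_of_isDisplacement_triangle {m : ℕ} (hm : Odd m)
    {a b c : ZMod (3 * m)} (hab : IsDisplacement m a b) (hbc : IsDisplacement m b c)
    (hca : IsDisplacement m c a) :
    castHom (dvd_mul_left m 3) (ZMod m) b = castHom (dvd_mul_left m 3) (ZMod m) a := by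
  obtain ⟨s₁, hs₁, hev₁, rfl⟩ := hab
  obtain ⟨s₂, hs₂, hev₂, rfl⟩ := hbc
  obtain ⟨s₃, hs₃, hev₃, hsum⟩ := hca
  have hodd : Odd (s₁ + s₂ + s₃) := by
    obtain ⟨t, ht⟩ := hm
    obtain ⟨t₁, ht₁⟩ := hev₁
    obtain ⟨t₂, ht₂⟩ := hev₂
    obtain ⟨t₃, ht₃⟩ := hev₃
    exact ⟨t₁ + t₂ + t₃ - 3 * t - 2, by push_cast [ht] at ht₁ ht₂ ht₃; omega⟩
  have hdvd : 3 * (m : ℤ) ∣ s₁ + s₂ + s₃ := by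
    have hzero : ((s₁ + s₂ + s₃ : ℤ) : ZMod (3 * m)) = 0 := by
      push_cast
      linear_combination -hsum
    exact_mod_cast (intCast_zmod_eq_zero_iff_dvd _ _).mp hzero
  have hs₁m : ((s₁ : ℤ) : ZMod m) = 0 := by
    rw [intCast_zmod_eq_zero_iff_dvd, ← Int.dvd_natAbs,
      Int.natAbs_eq_of_three_mul_dvd_add hs₁ hs₂ hs₃ hodd hdvd]
  rw [map_add, map_intCast, hs₁m, add_zero]

theorem Subdivision.castHom_branch_eq {V : Type*} {G : SimpleGraph V} {m : ℕ} (hm : Odd m)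
    (hm₁ : 1 < m) (hconn : G.Preconnected)
    (htri : ∀ u v : V, G.Adj u v → ∃ z : V, G.Adj u z ∧ G.Adj v z)
    (h : Subdivision G (m - 1) →g cycleZMod (3 * m)) (u v : V) :
    ZMod.castHom (dvd_mul_left m 3) (ZMod m) (h (Sum.inl u)) =
      ZMod.castHom (dvd_mul_left m 3) (ZMod m) (h (Sum.inl v)) := by
  have hdisp (d : G.Dart) : ZMod.IsDisplacement m (h (Sum.inl d.fst)) (h (Sum.inl d.snd)) := by
    simpa [Nat.sub_add_cancel hm₁.le] using isDisplacement_fst_snd (by omega) h d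
  refine (hconn u v).eq_of_forall_adj (f := fun x => ZMod.castHom _ (ZMod m) (h (Sum.inl x)))
    fun x y hxy => ?_
  obtain ⟨z, hxz, hyz⟩ := htri x y hxy
  exact (ZMod.castHom_eq_of_isDisplacement_triangle hm (hdisp ⟨(x, y), hxy⟩)
    (hdisp ⟨(y, z), hyz⟩) (hdisp ⟨(z, x), hxz.symm⟩)).symm

theorem ZMod.eq_or_eq_add_or_eq_add_two_mul_of_castHom_eq {m : ℕ} [NeZero m]
    {x y : ZMod (3 * m)}
    (hxy : castHom (dvd_mul_left m 3) (ZMod m) x = castHom (dvd_mul_left m 3) (ZMod m) y) :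
    x = y ∨ x = y + (m : ℕ) ∨ x = y + 2 * (m : ℕ) := by
  obtain ⟨z, rfl⟩ : ∃ z, x = y + z := ⟨x - y, by ring⟩
  have hz : ((z.val : ℕ) : ZMod m) = 0 := by
    rwa [map_add, add_eq_left, ← natCast_zmod_val z, map_natCast] at hxy
  obtain ⟨q, hq⟩ := (natCast_eq_zero_iff _ _).mp hz
  have hq3 : q < 3 := by
    have := z.val_lt
    rw [hq, mul_comm 3] at this
    exact Nat.lt_of_mul_lt_mul_left this
  rw [← natCast_zmod_val z, hq]
  interval_cases q <;> simp [mul_comm]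

/-- Let `r ≥ 1`, let `G` be a connected graph in which every edge lies in a
triangle, and let `h` be a homomorphism from `G^{5^r - 1}` to `C_{3·5^r}`.
Then there is `i` such that `h` maps every branch vertex into
`{i, i + 5^r, i + 2·5^r}`. -/
theorem statement1 {V : Type*} (r : ℕ) (hr : 1 ≤ r) (G : SimpleGraph V)
    (hconn : G.Connected)
    (htri : ∀ u v : V, G.Adj u v → ∃ z : V, G.Adj u z ∧ G.Adj v z)
    (h : Subdivision G (5 ^ r - 1) →g cycleZMod (3 * 5 ^ r)) :
    ∃ i : ZMod (3 * 5 ^ r), ∀ u : V,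
      h (Sum.inl u) = i ∨ h (Sum.inl u) = i + (5 ^ r : ℕ) ∨
        h (Sum.inl u) = i + 2 * (5 ^ r : ℕ) := by
  obtain ⟨u₀⟩ := hconn.nonempty
  have hodd : Odd (5 ^ r) := Odd.pow (by decide)
  have hgt : 1 < 5 ^ r := Nat.one_lt_pow (by omega) (by norm_num)
  exact ⟨h (Sum.inl u₀), fun u => ZMod.eq_or_eq_add_or_eq_add_two_mul_of_castHom_eq
    (Subdivision.castHom_branch_eq hodd hgt hconn.preconnected htri h u u₀)⟩
end

section
/- Let r ≥ 1 be an integer and let G be a connected subcubic simple graph containing at least one vertex of degree 3. Then there is a locally bijective homomorphism from G to the complete graph K_4 if and only if there is a locally bijective homomorphism from the r-subdivision G^r to the r-subdivision K_4^r. -/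
/-- A homomorphism `f : G →g H` is locally bijective if for every vertex `u`
the restriction of `f` to the open neighbourhood of `u`, viewed as a map into
the open neighbourhood of `f u`, is a bijection. -/
def GraphHomLocallyBijective {V W : Type*} {G : SimpleGraph V} {H : SimpleGraph W}
    (f : G →g H) : Prop :=
  ∀ u : V, Set.BijOn f (G.neighborSet u) (H.neighborSet (f u))

/-- A homomorphism `f : G →g H` is locally surjective if for every vertex `u`
the restriction of `f` to the open neighbourhood of `u`, viewed as a map into
the open neighbourhood of `f u`, is surjective. -/
def GraphHomLocallySurjective {V W : Type*} {G : SimpleGraph V} {H : SimpleGraph W}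
    (f : G →g H) : Prop :=
  ∀ u : V, Set.SurjOn f (G.neighborSet u) (H.neighborSet (f u))

/-- A homomorphism `f : G →g H` is locally injective if for every vertex `u`
the restriction of `f` to the open neighbourhood of `u`, viewed as a map into
the open neighbourhood of `f u`, is injective. -/
def GraphHomLocallyInjective {V W : Type*} {G : SimpleGraph V} {H : SimpleGraph W}
    (f : G →g H) : Prop :=
  ∀ u : V, Set.InjOn f (G.neighborSet u)

/-!
A locally bijective `f : G →g H` induces one on subdivisions: the path replacing the edge `uv`
is sent onto the path replacing `f u f v`. Conversely, let `F : G^r →g H^r` be locally bijective.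
Internal vertices of a subdivision have exactly two neighbours, so `F` sends a vertex of `G` of
degree other than `2` to a branch vertex. Local injectivity then forces `F` to map the path leaving
a branch vertex along an edge onto a whole subdivided edge of `H`, so its far end is again sent to
a branch vertex; by connectivity all branch vertices go to branch vertices, and the restriction of
`F` to them is a locally bijective homomorphism `G →g H`.
-/

open SimpleGraph

theorem SimpleGraph.ncard_neighborSet_eq_degree {V : Type*} (G : SimpleGraph V) (v : V)
    [Fintype (G.neighborSet v)] : (G.neighborSet v).ncard = G.degree v := by
  rw [← Nat.card_coe_set_eq, Nat.card_eq_fintype_card, card_neighborSet_eq_degree]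

theorem GraphHomLocallyBijective.ncard_neighborSet {V W : Type*} {G : SimpleGraph V}
    {H : SimpleGraph W} {f : G →g H} (hf : GraphHomLocallyBijective f) (u : V) :
    (H.neighborSet (f u)).ncard = (G.neighborSet u).ncard := by
  rw [← (hf u).image_eq, (hf u).injOn.ncard_image]

theorem GraphHomLocallyBijective.locallyInjective {V W : Type*} {G : SimpleGraph V}
    {H : SimpleGraph W} {f : G →g H} (hf : GraphHomLocallyBijective f) :
    GraphHomLocallyInjective f :=
  fun u => (hf u).injOn

namespace Subdivision

variable {V W : Type*} {G : SimpleGraph V} {H : SimpleGraph W} {k : ℕ}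

/-- The `i`-th internal vertex (counting from `0` at the end `d.fst`) of the path replacing
the edge of the dart `d`. -/
def internal (G : SimpleGraph V) (k : ℕ) (d : G.Dart) (i : ℕ) (h : i < k) : SubdivVertex G k :=
  Sum.inr (Quot.mk (SubdivRep G k) (d, ⟨i, h⟩))

lemma subdivRep_symm {a b : G.Dart × Fin k} (h : SubdivRep G k a b) : SubdivRep G k b a := by
  obtain ⟨h1, h2⟩ := h
  refine ⟨by rw [h1, Dart.symm_symm], ?_⟩
  have := a.2.isLt
  omega

lemma eq_or_subdivRep_of_eqvGen {a b : G.Dart × Fin k}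
    (h : Relation.EqvGen (SubdivRep G k) a b) : a = b ∨ SubdivRep G k a b := by
  induction h with
  | rel _ _ h => exact Or.inr h
  | refl _ => exact Or.inl rfl
  | symm _ _ _ ih => exact ih.imp Eq.symm subdivRep_symm
  | trans x y _ _ _ ih₁ ih₂ =>
    rcases ih₁ with rfl | ⟨hxy, nxy⟩
    · exact ih₂
    rcases ih₂ with rfl | ⟨hyz, nyz⟩
    · exact Or.inr ⟨hxy, nxy⟩
    have := x.2.isLt
    have := y.2.isLt
    exact Or.inl (Prod.ext (by rw [hyz, hxy, Dart.symm_symm]) (Fin.ext (by omega)))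

lemma internal_eq_internal_iff {d e : G.Dart} {i j : ℕ} {hi : i < k} {hj : j < k} :
    internal G k d i hi = internal G k e j hj ↔
      d = e ∧ i = j ∨ e = d.symm ∧ j = k - 1 - i := by
  rw [internal, internal, Sum.inr.injEq, Quot.eq]
  constructor
  · intro h
    rcases eq_or_subdivRep_of_eqvGen h with h | h
    · simp only [Prod.mk.injEq, Fin.mk.injEq] at h
      exact Or.inl h
    · exact Or.inr h
  · rintro (⟨rfl, rfl⟩ | ⟨rfl, rfl⟩)
    · exact Relation.EqvGen.refl _
    · exact Relation.EqvGen.rel _ _ ⟨rfl, rfl⟩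

lemma internal_congr {d : G.Dart} {i j : ℕ} (hi : i < k) (hj : j < k) (h : i = j) :
    internal G k d i hi = internal G k d j hj := by
  subst h; rfl

lemma internal_symm {d : G.Dart} {i : ℕ} (hi : i < k) :
    internal G k d i hi = internal G k d.symm (k - 1 - i) (by omega) :=
  internal_eq_internal_iff.mpr (Or.inr ⟨rfl, rfl⟩)

lemma internal_zero_inj {d e : G.Dart} (hde : d.fst = e.fst) (hk : 0 < k) :
    internal G k d 0 hk = internal G k e 0 hk ↔ d = e := by
  refine ⟨fun h => ?_, fun h => by subst h; rfl⟩
  rcases internal_eq_internal_iff.mp h with ⟨rfl, -⟩ | ⟨rfl, -⟩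
  · rfl
  · exact absurd hde d.fst_ne_snd

lemma ne_of_subdivAdjBase {x y : SubdivVertex G k} (h : SubdivAdjBase G k x y) : x ≠ y := by
  rcases x with u | x <;> rcases y with v | y
  · exact h.elim
  · exact Sum.inl_ne_inr
  · exact h.elim
  · obtain ⟨d, i, j, hj, rfl, rfl⟩ := h
    intro hq
    rcases internal_eq_internal_iff.mp hq with ⟨-, hij⟩ | ⟨hd, -⟩
    · omega
    · exact d.fst_ne_snd (congrArg (·.fst) hd)

lemma adj_of_subdivAdjBase {x y : SubdivVertex G k} (h : SubdivAdjBase G k x y) :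
    (Subdivision G k).Adj x y :=
  ⟨ne_of_subdivAdjBase h, Or.inl h⟩

lemma adj_inl_iff {u : V} {z : SubdivVertex G k} :
    (Subdivision G k).Adj (Sum.inl u) z ↔
      ∃ (d : G.Dart) (h : 0 < k), d.fst = u ∧ z = internal G k d 0 h := by
  constructor
  · rintro ⟨-, hb | hb⟩
    · rcases z with v | x
      · exact hb.elim
      · obtain ⟨d, ⟨i, hi⟩, rfl, hdu, rfl⟩ := hb
        exact ⟨d, hi, hdu, rfl⟩
    · rcases z with v | x <;> exact hb.elim
  · rintro ⟨d, hk, rfl, rfl⟩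
    exact adj_of_subdivAdjBase ⟨d, ⟨0, hk⟩, rfl, rfl, rfl⟩

lemma adj_inr_inr_iff {x y : SubdivInternal G k} :
    (Subdivision G k).Adj (Sum.inr x) (Sum.inr y) ↔
      ∃ (d : G.Dart) (i : ℕ) (h : i + 1 < k),
        Sum.inr x = internal G k d i (by omega) ∧ Sum.inr y = internal G k d (i + 1) h := by
  constructor
  · rintro ⟨-, ⟨d, i, j, hji, rfl, rfl⟩ | ⟨d, i, j, hji, rfl, rfl⟩⟩
    · have := j.isLt
      exact ⟨d, i, by omega, rfl, internal_congr j.isLt _ hji⟩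
    · have := j.isLt
      exact ⟨d.symm, k - 1 - j, by omega, internal_symm j.isLt,
        (internal_symm i.isLt).trans (internal_congr _ _ (by omega))⟩
  · rintro ⟨d, i, h, hx, hy⟩
    refine adj_of_subdivAdjBase ⟨d, ⟨i, by omega⟩, ⟨i + 1, h⟩, rfl, ?_, ?_⟩
    · exact Sum.inr_injective hx
    · exact Sum.inr_injective hy

/-- The `j`-th vertex of the path
`d.fst = pathVertex G k d 0, …, pathVertex G k d (k + 1) = d.snd`
replacing the edge of `d`; indices beyond `k + 1` also give `d.snd`. -/
def pathVertex (G : SimpleGraph V) (k : ℕ) (d : G.Dart) (j : ℕ) : SubdivVertex G k :=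
  if h : 1 ≤ j ∧ j ≤ k then internal G k d (j - 1) (by omega)
  else if j = 0 then Sum.inl d.fst else Sum.inl d.snd

lemma pathVertex_zero (d : G.Dart) : pathVertex G k d 0 = Sum.inl d.fst := by
  simp [pathVertex]

lemma pathVertex_last (d : G.Dart) : pathVertex G k d (k + 1) = Sum.inl d.snd := by
  simp [pathVertex]

lemma pathVertex_eq_internal (d : G.Dart) {j : ℕ} (h₁ : 1 ≤ j) (h₂ : j ≤ k) :
    pathVertex G k d j = internal G k d (j - 1) (by omega) := by
  simp [pathVertex, h₁, h₂]

lemma pathVertex_adj (hk : 0 < k) (d : G.Dart) {j : ℕ} (hj : j ≤ k) :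
    (Subdivision G k).Adj (pathVertex G k d j) (pathVertex G k d (j + 1)) := by
  rcases Nat.eq_zero_or_pos j with rfl | hj₁
  · rw [pathVertex_zero, pathVertex_eq_internal d le_rfl hk]
    exact adj_inl_iff.mpr ⟨d, hk, rfl, rfl⟩
  rcases hj.eq_or_lt with rfl | hjk
  · rw [pathVertex_last, pathVertex_eq_internal d hj₁ le_rfl]
    refine (adj_inl_iff.mpr ⟨d.symm, hk, rfl, ?_⟩).symm
    exact (internal_symm _).trans (internal_congr _ _ (by omega))
  · rw [pathVertex_eq_internal d hj₁ hj, pathVertex_eq_internal d (by omega) hjk]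
    exact adj_of_subdivAdjBase
      ⟨d, ⟨j - 1, by omega⟩, ⟨j, by omega⟩, by dsimp only; omega, rfl, rfl⟩

lemma pathVertex_ne_add_two (d : G.Dart) {j : ℕ} (hj : j + 1 ≤ k) :
    pathVertex G k d j ≠ pathVertex G k d (j + 2) := by
  have hk : 0 < k := by omega
  rcases Nat.eq_zero_or_pos j with rfl | hj₁
  · rw [pathVertex_zero]
    rcases hj.eq_or_lt with rfl | h₂
    · rw [pathVertex_last]
      exact Sum.inl_injective.ne d.fst_ne_snd
    · rw [pathVertex_eq_internal d (by omega) h₂]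
      exact Sum.inl_ne_inr
  rcases hj.eq_or_lt with rfl | h₂
  · rw [pathVertex_last, pathVertex_eq_internal d hj₁ (by omega)]
    exact Sum.inr_ne_inl
  · rw [pathVertex_eq_internal d hj₁ (by omega), pathVertex_eq_internal d (by omega) h₂]
    intro h
    rcases internal_eq_internal_iff.mp h with ⟨-, hij⟩ | ⟨hd, -⟩
    · omega
    · exact d.fst_ne_snd (congrArg (·.fst) hd)

lemma neighborSet_internal (d : G.Dart) {i : ℕ} (h : i < k) :
    (Subdivision G k).neighborSet (internal G k d i h) =
      {pathVertex G k d i, pathVertex G k d (i + 2)} := by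
  have hk : 0 < k := by omega
  have hself : internal G k d i h = pathVertex G k d (i + 1) :=
    (pathVertex_eq_internal d (by omega) h).symm
  ext z
  simp only [mem_neighborSet, Set.mem_insert_iff, Set.mem_singleton_iff]
  refine ⟨fun hz => ?_, ?_⟩
  · rcases z with u | y
    · obtain ⟨e, he, rfl, heq⟩ := adj_inl_iff.mp hz.symm
      rcases internal_eq_internal_iff.mp heq with ⟨rfl, rfl⟩ | ⟨rfl, hi⟩
      · exact Or.inl (pathVertex_zero d).symm
      · rw [show i + 2 = k + 1 by omega, pathVertex_last]
        exact Or.inr rfl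
    · obtain ⟨e, l, hl, hx, hy⟩ := adj_inr_inr_iff.mp hz
      rw [hy]
      rcases internal_eq_internal_iff.mp hx with ⟨rfl, rfl⟩ | ⟨rfl, rfl⟩
      · exact Or.inr ((pathVertex_eq_internal d (by omega) (by omega)).trans
          (internal_congr _ _ (by omega))).symm
      · refine Or.inl ((pathVertex_eq_internal d (by omega) (by omega)).trans ?_).symm
        exact (internal_symm _).trans (internal_congr _ _ (by omega))
  · rintro (rfl | rfl)
    · rw [hself]
      exact (pathVertex_adj hk d (by omega)).symm
    · rw [hself]
      exact pathVertex_adj hk d (by omega)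

lemma ncard_neighborSet_internal (d : G.Dart) {i : ℕ} (h : i < k) :
    ((Subdivision G k).neighborSet (internal G k d i h)).ncard = 2 := by
  rw [neighborSet_internal, Set.ncard_pair (pathVertex_ne_add_two d (by omega))]

lemma ncard_neighborSet_inl (hk : 0 < k) (u : V) :
    ((Subdivision G k).neighborSet (Sum.inl u)).ncard = (G.neighborSet u).ncard := by
  refine (Set.ncard_congr (fun v hv => internal G k ⟨(u, v), hv⟩ 0 hk) ?_ ?_ ?_).symm
  · exact fun v hv => adj_inl_iff.mpr ⟨_, hk, rfl, rfl⟩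
  · intro v w hv hw h
    exact congrArg (·.snd) ((internal_zero_inj (by rfl) hk).mp h)
  · intro z hz
    obtain ⟨d, -, rfl, rfl⟩ := adj_inl_iff.mp hz
    exact ⟨d.snd, d.adj, rfl⟩

def mapVertex (f : G →g H) : SubdivVertex G k → SubdivVertex H k :=
  Sum.map f (Quot.map (fun p => (f.mapDart p.1, p.2)) fun _ _ h => ⟨by rw [h.1]; rfl, h.2⟩)

lemma subdivAdjBase_mapVertex (f : G →g H) {x y : SubdivVertex G k}
    (h : SubdivAdjBase G k x y) : SubdivAdjBase H k (mapVertex f x) (mapVertex f y) := by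
  rcases x with u | x <;> rcases y with v | y
  · exact h.elim
  · obtain ⟨d, i, hi, rfl, rfl⟩ := h
    exact ⟨f.mapDart d, i, hi, rfl, rfl⟩
  · exact h.elim
  · obtain ⟨d, i, j, hji, rfl, rfl⟩ := h
    exact ⟨f.mapDart d, i, j, hji, rfl, rfl⟩

def map (f : G →g H) : Subdivision G k →g Subdivision H k where
  toFun := mapVertex f
  map_rel' := by
    rintro x y ⟨-, h | h⟩
    · exact adj_of_subdivAdjBase (subdivAdjBase_mapVertex f h)
    · exact (adj_of_subdivAdjBase (subdivAdjBase_mapVertex f h)).symm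

lemma map_internal (f : G →g H) (d : G.Dart) {i : ℕ} (h : i < k) :
    map f (internal G k d i h) = internal H k (f.mapDart d) i h := rfl

lemma map_pathVertex (f : G →g H) (d : G.Dart) (j : ℕ) :
    map f (pathVertex G k d j) = pathVertex H k (f.mapDart d) j := by
  unfold pathVertex
  split_ifs <;> rfl

lemma bijOn_neighborSet_inl_map {f : G →g H} (hf : GraphHomLocallyBijective f) (u : V) :
    Set.BijOn (map (k := k) f) ((Subdivision G k).neighborSet (Sum.inl u))
      ((Subdivision H k).neighborSet (Sum.inl (f u))) := by
  refine ⟨fun z hz => (map f).map_adj hz, ?_, ?_⟩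
  · intro z hz z' hz' h
    obtain ⟨d, hk, rfl, rfl⟩ := adj_inl_iff.mp hz
    obtain ⟨d', hk', hd', rfl⟩ := adj_inl_iff.mp hz'
    have hfd : f.mapDart d = f.mapDart d' :=
      (internal_zero_inj (by simp [hd']) hk).mp h
    have hsnd : d.snd = d'.snd :=
      (hf d.fst).injOn (d.adj) (hd' ▸ d'.adj) (congrArg (·.snd) hfd)
    exact (internal_zero_inj hd'.symm hk).mpr (Dart.ext _ _ (Prod.ext hd'.symm hsnd))
  · intro w hw
    obtain ⟨e, hk, he, rfl⟩ := adj_inl_iff.mp hw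
    obtain ⟨v, hv, hfv⟩ := (hf u).surjOn (show e.snd ∈ H.neighborSet (f u) from he ▸ e.adj)
    refine ⟨internal G k ⟨(u, v), hv⟩ 0 hk, adj_inl_iff.mpr ⟨_, hk, rfl, rfl⟩, ?_⟩
    rw [map_internal]
    congr 1
    exact Dart.ext _ _ (Prod.ext he.symm hfv)

lemma bijOn_neighborSet_internal_map (f : G →g H) (d : G.Dart) {i : ℕ} (h : i < k) :
    Set.BijOn (map f) ((Subdivision G k).neighborSet (internal G k d i h))
      ((Subdivision H k).neighborSet (map f (internal G k d i h))) := by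
  rw [map_internal, neighborSet_internal, neighborSet_internal, ← map_pathVertex,
    ← map_pathVertex]
  refine Set.image_pair (map f) _ _ ▸ Set.InjOn.bijOn_image (Set.injOn_pair.mpr fun hfd => ?_)
  rw [map_pathVertex, map_pathVertex] at hfd
  exact absurd hfd (pathVertex_ne_add_two _ (by omega))

theorem locallyBijective_map {f : G →g H} (hf : GraphHomLocallyBijective f) :
    GraphHomLocallyBijective (map (k := k) f) := by
  rintro (u | q)
  · exact bijOn_neighborSet_inl_map hf u
  · induction q using Quot.ind with
    | mk p => exact bijOn_neighborSet_internal_map f p.1 p.2.isLt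

section Lifting

variable {F : Subdivision G k →g Subdivision H k}

lemma apply_pathVertex_add_two (hF : GraphHomLocallyInjective F) (d : G.Dart) (e : H.Dart)
    {j : ℕ} (hj : j + 1 ≤ k) (h₀ : F (pathVertex G k d j) = pathVertex H k e j)
    (h₁ : F (pathVertex G k d (j + 1)) = pathVertex H k e (j + 1)) :
    F (pathVertex G k d (j + 2)) = pathVertex H k e (j + 2) := by
  have hk : 0 < k := by omega
  have hprev := (pathVertex_adj hk d (j := j) (by omega)).symm
  have hnext := pathVertex_adj hk d (j := j + 1) hj
  have hc : F (pathVertex G k d (j + 2)) ∈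
      (Subdivision H k).neighborSet (F (pathVertex G k d (j + 1))) := F.map_adj hnext
  rw [h₁, pathVertex_eq_internal e (by omega) hj, neighborSet_internal] at hc
  simp only [Nat.add_sub_cancel, Set.mem_insert_iff, Set.mem_singleton_iff] at hc
  refine hc.resolve_left fun hback => pathVertex_ne_add_two d hj ?_
  exact hF _ hprev hnext (h₀.trans hback.symm)

lemma exists_dart_apply_pathVertex (hF : GraphHomLocallyInjective F) (hk : 0 < k) (d : G.Dart)
    {A : W} (hA : F (Sum.inl d.fst) = Sum.inl A) :
    ∃ e : H.Dart, e.fst = A ∧ ∀ j ≤ k + 1, F (pathVertex G k d j) = pathVertex H k e j := by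
  have hadj : (Subdivision H k).Adj (Sum.inl A) (F (internal G k d 0 hk)) :=
    hA ▸ F.map_adj (adj_inl_iff.mpr ⟨d, hk, rfl, rfl⟩)
  obtain ⟨e, _, he, hfirst⟩ := adj_inl_iff.mp hadj
  have hpair : ∀ j ≤ k, F (pathVertex G k d j) = pathVertex H k e j ∧
      F (pathVertex G k d (j + 1)) = pathVertex H k e (j + 1) := by
    intro j hj
    induction j with
    | zero =>
      rw [pathVertex_zero, pathVertex_zero, hA, he, pathVertex_eq_internal d le_rfl hk,
        pathVertex_eq_internal e le_rfl hk]
      exact ⟨rfl, hfirst⟩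
    | succ j ih =>
      obtain ⟨h₀, h₁⟩ := ih (by omega)
      exact ⟨h₁, apply_pathVertex_add_two hF d e hj h₀ h₁⟩
  refine ⟨e, he, fun j hj => ?_⟩
  rcases j with _ | j
  · exact (hpair 0 (by omega)).1
  · exact (hpair j (by omega)).2

lemma exists_apply_inl_eq_inl_of_reachable (hF : GraphHomLocallyInjective F) (hk : 0 < k) {u v : V}
    (huv : G.Reachable u v) (hu : ∃ A, F (Sum.inl u) = Sum.inl A) :
    ∃ B, F (Sum.inl v) = Sum.inl B := by
  obtain ⟨p⟩ := huv
  induction p with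
  | nil => exact hu
  | cons hadj _ ih =>
    obtain ⟨A, hA⟩ := hu
    obtain ⟨e, -, hpath⟩ := exists_dart_apply_pathVertex hF hk ⟨(_, _), hadj⟩ hA
    have hlast := hpath (k + 1) le_rfl
    rw [pathVertex_last, pathVertex_last] at hlast
    exact ih ⟨e.snd, hlast⟩

lemma exists_apply_inl_eq_inl_of_ncard_ne_two (hF : GraphHomLocallyBijective F) (hk : 0 < k) {u : V}
    (hu : (G.neighborSet u).ncard ≠ 2) : ∃ A, F (Sum.inl u) = Sum.inl A := by
  rcases hFu : F (Sum.inl u) with A | q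
  · exact ⟨A, rfl⟩
  · induction q using Quot.ind with
    | mk p =>
      have hcard := hF.ncard_neighborSet (Sum.inl u)
      rw [hFu, ncard_neighborSet_inl hk] at hcard
      exact absurd (hcard.symm.trans (ncard_neighborSet_internal p.1 p.2.isLt)) hu

lemma apply_internal_zero_of_apply_inl (hF : GraphHomLocallyInjective F) (hk : 0 < k) {f : V → W}
    (hf : ∀ u, F (Sum.inl u) = Sum.inl (f u)) (d : G.Dart) :
    ∃ h : H.Adj (f d.fst) (f d.snd),
      F (internal G k d 0 hk) = internal H k ⟨(f d.fst, f d.snd), h⟩ 0 hk := by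
  obtain ⟨e, he, hpath⟩ := exists_dart_apply_pathVertex hF hk d (hf d.fst)
  have hsnd : e.snd = f d.snd := by
    have hlast := hpath (k + 1) le_rfl
    rw [pathVertex_last, pathVertex_last, hf] at hlast
    exact (Sum.inl_injective hlast).symm
  have hfirst := hpath 1 (by omega)
  rw [pathVertex_eq_internal d le_rfl hk, pathVertex_eq_internal e le_rfl hk] at hfirst
  rw [show e = ⟨(f d.fst, f d.snd), he ▸ hsnd ▸ e.adj⟩ from
    Dart.ext _ _ (Prod.ext he hsnd)] at hfirst
  exact ⟨_, hfirst⟩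

lemma locallyBijective_of_apply_inl (hF : GraphHomLocallyBijective F) (hk : 0 < k) (f : G →g H)
    (hf : ∀ u, F (Sum.inl u) = Sum.inl (f u)) : GraphHomLocallyBijective f := by
  intro u
  have hnbr : ∀ {v} (huv : G.Adj u v),
      internal G k ⟨(u, v), huv⟩ 0 hk ∈ (Subdivision G k).neighborSet (Sum.inl u) :=
    fun _ => adj_inl_iff.mpr ⟨_, hk, rfl, rfl⟩
  refine ⟨fun v hv => f.map_adj hv, fun v hv w hw hvw => ?_, fun B hB => ?_⟩
  · obtain ⟨_, hv'⟩ := apply_internal_zero_of_apply_inl hF.locallyInjective hk hf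
      ⟨(u, v), hv⟩
    obtain ⟨_, hw'⟩ := apply_internal_zero_of_apply_inl hF.locallyInjective hk hf
      ⟨(u, w), hw⟩
    have hFvw :
        F (internal G k ⟨(u, v), hv⟩ 0 hk) = F (internal G k ⟨(u, w), hw⟩ 0 hk) := by
      rw [hv', hw']
      exact (internal_zero_inj (by rfl) hk).mpr (Dart.ext _ _ (Prod.ext rfl hvw))
    have hdart := (internal_zero_inj (by rfl) hk).mp
      (hF.locallyInjective _ (hnbr hv) (hnbr hw) hFvw)
    exact congrArg (·.snd) hdart
  · have hmem : internal H k ⟨(f u, B), hB⟩ 0 hk ∈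
        (Subdivision H k).neighborSet (F (Sum.inl u)) := by
      rw [hf]
      exact adj_inl_iff.mpr ⟨_, hk, rfl, rfl⟩
    obtain ⟨z, hz, hFz⟩ := (hF (Sum.inl u)).surjOn hmem
    obtain ⟨d, hk', rfl, rfl⟩ := adj_inl_iff.mp hz
    obtain ⟨_, hd⟩ := apply_internal_zero_of_apply_inl hF.locallyInjective hk' hf d
    have hdart := (internal_zero_inj (by rfl) hk').mp (hd.symm.trans hFz)
    exact ⟨d.snd, d.adj, congrArg (·.snd) hdart⟩

theorem exists_locallyBijective_of_apply_inl_eq_inl (hk : 0 < k) (hG : G.Preconnected)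
    (hF : GraphHomLocallyBijective F) {u₀ : V} (hu₀ : ∃ A, F (Sum.inl u₀) = Sum.inl A) :
    ∃ f : G →g H, GraphHomLocallyBijective f := by
  choose f hf using fun v =>
    exists_apply_inl_eq_inl_of_reachable hF.locallyInjective hk (hG u₀ v) hu₀
  have hadj : ∀ {u v}, G.Adj u v → H.Adj (f u) (f v) := fun huv =>
    (apply_internal_zero_of_apply_inl hF.locallyInjective hk hf ⟨(_, _), huv⟩).1
  exact ⟨⟨f, hadj⟩, locallyBijective_of_apply_inl hF hk ⟨f, hadj⟩ hf⟩

end Lifting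

end Subdivision

theorem statement3_general {V : Type*} [Fintype V] (G : SimpleGraph V)
    [DecidableRel G.Adj] (r : ℕ) (hr : 1 ≤ r) (hconn : G.Connected)
    (hdeg3 : ∃ v : V, G.degree v = 3) :
    (∃ f : G →g SimpleGraph.completeGraph (Fin 4), GraphHomLocallyBijective f) ↔
      (∃ f : Subdivision G r →g Subdivision (SimpleGraph.completeGraph (Fin 4)) r,
        GraphHomLocallyBijective f) := by
  refine ⟨fun ⟨f, hf⟩ => ⟨Subdivision.map f, Subdivision.locallyBijective_map hf⟩,
    fun ⟨F, hF⟩ => ?_⟩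
  obtain ⟨v₀, hv₀⟩ := hdeg3
  have hbranch : (G.neighborSet v₀).ncard ≠ 2 := by
    rw [ncard_neighborSet_eq_degree, hv₀]
    decide
  exact Subdivision.exists_locallyBijective_of_apply_inl_eq_inl hr hconn.preconnected hF
    (Subdivision.exists_apply_inl_eq_inl_of_ncard_ne_two hF hr hbranch)

/-- Let `r ≥ 1` and let `G` be a connected subcubic graph with at least one
vertex of degree 3.  Then there is a locally bijective homomorphism from `G`
to `K₄` if and only if there is one from `G^r` to `K₄^r`. -/
theorem statement3 {V : Type*} [Fintype V] (G : SimpleGraph V)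
    [DecidableRel G.Adj] (r : ℕ) (hr : 1 ≤ r) (hconn : G.Connected)
    (hcubic : ∀ v : V, G.degree v ≤ 3) (hdeg3 : ∃ v : V, G.degree v = 3) :
    (∃ f : G →g SimpleGraph.completeGraph (Fin 4), GraphHomLocallyBijective f) ↔
      (∃ f : Subdivision G r →g Subdivision (SimpleGraph.completeGraph (Fin 4)) r,
        GraphHomLocallyBijective f) :=
  statement3_general G r hr hconn hdeg3
end

section
/- Let r ≥ 1 be an integer, let G be a connected subcubic simple graph containing at least one vertex of degree 3, and let h be a locally surjective homomorphism from the r-subdivision G^r to the r-subdivision K_4^r. Then for every vertex v of G^r, h(v) is a branch vertex of K_4^r if and only if v is a branch vertex of G^r. -/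
/-!
An internal vertex of `G^r` has two neighbours and a branch vertex of `K₄^r` has three; since a
locally surjective map cannot increase the number of neighbours, internal vertices go to internal
vertices. At an internal vertex with internal image, local surjectivity forces its two neighbours
onto the two distinct neighbours of the image, so the subdivided edge `u = s₀, s₁, …, s_{r+1}` of
`G^r` is mapped onto a non-backtracking walk of `K₄^r` whose `r` inner vertices are internal.
Such a walk runs monotonically along one subdivided edge, so it covers all `r` internal vertices of
that edge and starts at a branch vertex.
-/

namespace GraphHomLocallySurjective

variable {V W : Type*} {G : SimpleGraph V} {H : SimpleGraph W} {f : G →g H}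

theorem encard_neighborSet_le (hf : GraphHomLocallySurjective f) (u : V) :
    (H.neighborSet (f u)).encard ≤ (G.neighborSet u).encard :=
  (Set.encard_le_encard (hf u)).trans (Set.encard_image_le _ _)

theorem map_eq_of_neighborSet_subset (hf : GraphHomLocallySurjective f) {u a b : V}
    (hu : G.neighborSet u ⊆ {a, b}) {y : W} (hy : H.Adj (f u) y) (hyb : y ≠ f b) : f a = y := by
  obtain ⟨p, hp, rfl⟩ := hf u hy
  rcases hu hp with rfl | rfl
  · rfl
  · exact absurd rfl hyb

end GraphHomLocallySurjective

namespace Subdivision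

variable {V W : Type*} {G : SimpleGraph V} {H : SimpleGraph W} {r : ℕ}
  {f : Subdivision G r →g Subdivision H r}

theorem mk_eq_mk_iff {a b : G.Dart × Fin r} :
    Quot.mk (SubdivRep G r) a = Quot.mk (SubdivRep G r) b ↔
      b = a ∨ b = (a.1.symm, a.2.rev) := by
  constructor
  · intro hab
    -- the class of `(d, i)` is `{(d, i), (d.symm, i.rev)}`
    have key : s(a, (a.1.symm, a.2.rev)) = s(b, (b.1.symm, b.2.rev)) :=
      congrArg (Quot.lift (fun a : G.Dart × Fin r => s(a, (a.1.symm, a.2.rev)))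
        (fun a b ⟨h1, h2⟩ => by
          obtain rfl : b = (a.1.symm, a.2.rev) := Prod.ext h1 (Fin.ext (by simp [h2]; omega))
          simp [Sym2.eq_swap])) hab
    have hb : b ∈ s(a, (a.1.symm, a.2.rev)) := key ▸ Sym2.mem_mk_left _ _
    simpa using hb
  · rintro (rfl | rfl)
    · rfl
    · exact Quot.sound ⟨rfl, by simp; omega⟩

/-- The `k`-th vertex, `0 ≤ k ≤ r + 1`, on the path of `G^r` replacing the edge of the dart `d`,
walked from `d.fst` to `d.snd`. -/
def edgeVertex (d : G.Dart) (k : ℕ) : SubdivVertex G r :=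
  if h : k = 0 then Sum.inl d.fst
  else if h' : k ≤ r then Sum.inr (Quot.mk _ (d, ⟨k - 1, by omega⟩))
  else Sum.inl d.snd

theorem edgeVertex_zero (d : G.Dart) : edgeVertex (r := r) d 0 = Sum.inl d.fst := rfl

theorem edgeVertex_of_lt {d : G.Dart} {k : ℕ} (hk : r < k) :
    edgeVertex (r := r) d k = Sum.inl d.snd := by
  rw [edgeVertex, dif_neg (by omega), dif_neg (by omega)]

theorem edgeVertex_of_pos_of_le {d : G.Dart} {k : ℕ} (hk : 0 < k) (hkr : k ≤ r) :
    edgeVertex (r := r) d k = Sum.inr (Quot.mk _ (d, ⟨k - 1, by omega⟩)) := by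
  rw [edgeVertex, dif_neg (by omega), dif_pos hkr]

theorem edgeVertex_succ_val (d : G.Dart) (i : Fin r) :
    edgeVertex d (i + 1) = Sum.inr (Quot.mk _ (d, i)) := by
  rw [edgeVertex_of_pos_of_le (by omega) i.isLt]
  rfl

theorem exists_edgeVertex_eq (x : SubdivInternal G r) :
    ∃ d k, 0 < k ∧ k ≤ r ∧ edgeVertex d k = Sum.inr x := by
  obtain ⟨⟨d, i⟩, rfl⟩ := Quot.exists_rep x
  exact ⟨d, i + 1, by omega, i.isLt, edgeVertex_succ_val d i⟩

theorem edgeVertex_symm (d : G.Dart) {k : ℕ} (hk : k ≤ r + 1) :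
    edgeVertex d.symm k = edgeVertex (r := r) d (r + 1 - k) := by
  rcases Nat.eq_zero_or_pos k with rfl | hk0
  · exact (edgeVertex_of_lt (by omega)).symm
  rcases hk.lt_or_eq with hk | rfl
  · rw [edgeVertex_of_pos_of_le hk0 (by omega), edgeVertex_of_pos_of_le (by omega) (by omega)]
    exact congrArg Sum.inr (mk_eq_mk_iff.mpr (Or.inr (Prod.ext rfl (Fin.ext (by simp; omega)))))
  · rw [edgeVertex_of_lt (by omega), Nat.sub_self]
    rfl

theorem edgeVertex_eq_edgeVertex_iff {d d' : G.Dart} {k l : ℕ} (hk : 0 < k) (hkr : k ≤ r)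
    (hl : 0 < l) (hlr : l ≤ r) :
    (edgeVertex d k : SubdivVertex G r) = edgeVertex d' l ↔
      d' = d ∧ l = k ∨ d' = d.symm ∧ l = r + 1 - k := by
  rw [edgeVertex_of_pos_of_le hk hkr, edgeVertex_of_pos_of_le hl hlr, Sum.inr.injEq,
    mk_eq_mk_iff]
  have hpos : l - 1 = k - 1 ↔ l = k := by omega
  have hrev : l - 1 = r - (k - 1 + 1) ↔ l = r + 1 - k := by omega
  simp only [Prod.ext_iff, Fin.ext_iff, Fin.val_rev, hpos, hrev]

theorem edgeVertex_ne_of_lt (d : G.Dart) {k l : ℕ} (hkl : k < l) (hl : l ≤ r + 1) :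
    (edgeVertex d k : SubdivVertex G r) ≠ edgeVertex d l := by
  rcases Nat.eq_zero_or_pos k with rfl | hk
  · rcases hl.lt_or_eq with hl | rfl
    · simp [edgeVertex_zero, edgeVertex_of_pos_of_le hkl (by omega : l ≤ r)]
    · simp [edgeVertex_zero, edgeVertex_of_lt (by omega : r < r + 1), d.fst_ne_snd]
  rcases hl.lt_or_eq with hl | rfl
  · rw [Ne, edgeVertex_eq_edgeVertex_iff hk (by omega) (by omega) (by omega)]
    rintro (⟨-, h⟩ | ⟨h, -⟩)
    · omega
    · exact d.symm_ne h.symm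
  · simp [edgeVertex_of_pos_of_le hk (by omega : k ≤ r), edgeVertex_of_lt (by omega : r < r + 1)]

theorem adj_edgeVertex_succ (hr : 0 < r) (d : G.Dart) {k : ℕ} (hk : k ≤ r) :
    (Subdivision G r).Adj (edgeVertex d k) (edgeVertex d (k + 1)) := by
  refine ⟨edgeVertex_ne_of_lt d k.lt_succ_self (by omega), ?_⟩
  rcases Nat.eq_zero_or_pos k with rfl | hk0
  · rw [edgeVertex_zero, zero_add, edgeVertex_of_pos_of_le one_pos hr]
    exact Or.inl ⟨d, _, rfl, rfl, rfl⟩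
  rcases hk.lt_or_eq with hk | rfl
  · rw [edgeVertex_of_pos_of_le hk0 hk.le, edgeVertex_of_pos_of_le (by omega) hk]
    exact Or.inl ⟨d, _, _, by simp; omega, rfl, rfl⟩
  · rw [edgeVertex_of_pos_of_le hk0 le_rfl, edgeVertex_of_lt (by omega)]
    refine Or.inr ⟨d.symm, ⟨0, hr⟩, rfl, rfl, mk_eq_mk_iff.mpr (Or.inr ?_)⟩
    exact Prod.ext rfl (Fin.ext (by simp; omega))

theorem neighborSet_edgeVertex_subset {d : G.Dart} {k : ℕ} (hk : 0 < k) (hkr : k ≤ r) :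
    (Subdivision G r).neighborSet (edgeVertex d k) ⊆
      {edgeVertex d (k - 1), edgeVertex d (k + 1)} := by
  intro y hy
  suffices ∃ d' l, 0 < l ∧ l ≤ r ∧ edgeVertex d' l = edgeVertex d k ∧
      (y = edgeVertex d' (l - 1) ∨ y = edgeVertex d' (l + 1)) by
    obtain ⟨d', l, hl, hlr, hdl, hy'⟩ := this
    rcases (edgeVertex_eq_edgeVertex_iff hk hkr hl hlr).mp hdl.symm with
      ⟨rfl, rfl⟩ | ⟨rfl, rfl⟩
    · exact hy'
    · rwa [edgeVertex_symm d (by omega), edgeVertex_symm d (by omega),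
        show r + 1 - (r + 1 - k - 1) = k + 1 by omega,
        show r + 1 - (r + 1 - k + 1) = k - 1 by omega, or_comm] at hy'
  have hdk := edgeVertex_of_pos_of_le (d := d) hk hkr
  obtain ⟨-, hb | hb⟩ := hy <;> rw [hdk] at hb <;>
    rcases y with u | z
  · exact hb.elim
  · obtain ⟨d', a, b, hab, hq, rfl⟩ := hb
    refine ⟨d', a + 1, by omega, a.isLt, by rw [edgeVertex_succ_val, hdk, hq], Or.inr ?_⟩
    rw [← edgeVertex_succ_val, hab]
  · obtain ⟨d', a, ha, rfl, hq⟩ := hb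
    refine ⟨d', a + 1, by omega, a.isLt, by rw [edgeVertex_succ_val, hdk, hq], Or.inl ?_⟩
    rw [ha]
    rfl
  · obtain ⟨d', a, b, hab, rfl, hq⟩ := hb
    refine ⟨d', b + 1, by omega, b.isLt, by rw [edgeVertex_succ_val, hdk, hq], Or.inl ?_⟩
    rw [← edgeVertex_succ_val, hab, Nat.add_sub_cancel]

theorem exists_dart_of_adj_inl {u : V} {y : SubdivVertex G r}
    (hy : (Subdivision G r).Adj (Sum.inl u) y) :
    ∃ d : G.Dart, d.fst = u ∧ y = edgeVertex d 1 := by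
  obtain ⟨-, hb | hb⟩ := hy <;> rcases y with v | x
  · exact hb.elim
  · obtain ⟨d, i, hi, hu, rfl⟩ := hb
    refine ⟨d, hu, ?_⟩
    rw [← zero_add 1, ← hi, edgeVertex_succ_val]
  · exact hb.elim
  · exact hb.elim

theorem encard_neighborSet_le_encard_neighborSet_inl (hr : 0 < r) (w : V) :
    (G.neighborSet w).encard ≤ ((Subdivision G r).neighborSet (Sum.inl w)).encard := by
  classical
  refine Set.encard_le_encard_of_injOn (f := fun v => if hv : G.Adj w v then
    edgeVertex ⟨(w, v), hv⟩ 1 else Sum.inl w) (fun v hv => ?_) (fun v hv v' hv' hvv' => ?_)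
  · rw [SimpleGraph.mem_neighborSet] at hv ⊢
    simp only [dif_pos hv]
    exact adj_edgeVertex_succ hr ⟨(w, v), hv⟩ (Nat.zero_le r)
  · rw [SimpleGraph.mem_neighborSet] at hv hv'
    simp only [dif_pos hv, dif_pos hv'] at hvv'
    rcases (edgeVertex_eq_edgeVertex_iff one_pos hr one_pos hr).mp hvv' with ⟨h, -⟩ | ⟨h, -⟩
    · simpa using (congrArg (fun d : G.Dart => d.snd) h).symm
    · exact absurd (congrArg (fun d : G.Dart => d.fst) h) (by simpa using (G.ne_of_adj hv))

theorem map_inr_ne_inl (hH : ∀ w, 3 ≤ (H.neighborSet w).encard)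
    (hf : GraphHomLocallySurjective f) (x : SubdivInternal G r) (w : W) :
    f (Sum.inr x) ≠ Sum.inl w := by
  intro hx
  obtain ⟨d, k, hk, hkr, hdk⟩ := exists_edgeVertex_eq x
  have hinternal : ((Subdivision G r).neighborSet (Sum.inr x)).encard ≤ 2 := by
    rw [← hdk]
    calc _ ≤ ({edgeVertex d (k - 1), edgeVertex d (k + 1)} : Set (SubdivVertex G r)).encard :=
          Set.encard_le_encard (neighborSet_edgeVertex_subset hk hkr)
      _ ≤ 2 := (Set.encard_insert_le _ _).trans (by rw [Set.encard_singleton]; rfl)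
  have hbranch : 3 ≤ ((Subdivision H r).neighborSet (Sum.inl w)).encard :=
    (hH w).trans (encard_neighborSet_le_encard_neighborSet_inl (by omega) w)
  have := (hbranch.trans (hx ▸ hf.encard_neighborSet_le (Sum.inr x))).trans hinternal
  norm_num at this

theorem map_edgeVertex_ne_inl (hint : ∀ x w, f (Sum.inr x) ≠ Sum.inl w) (d : G.Dart) {k : ℕ}
    (hk : 0 < k) (hkr : k ≤ r) (w : W) : f (edgeVertex d k) ≠ Sum.inl w := by
  rw [edgeVertex_of_pos_of_le hk hkr]
  exact hint _ w

theorem map_edgeVertex_sub_one (hf : GraphHomLocallySurjective f) {d : G.Dart} {e : H.Dart}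
    {k l : ℕ} (hk : 0 < k) (hkr : k ≤ r) (hl : 0 < l) (hlr : l ≤ r)
    (hdk : f (edgeVertex d k) = edgeVertex e l)
    (hdk' : f (edgeVertex d (k + 1)) = edgeVertex e (l + 1)) :
    f (edgeVertex d (k - 1)) = edgeVertex e (l - 1) := by
  refine hf.map_eq_of_neighborSet_subset (neighborSet_edgeVertex_subset hk hkr) ?_ ?_
  · rw [hdk]
    have := adj_edgeVertex_succ (r := r) (by omega) e (k := l - 1) (by omega)
    rw [Nat.sub_add_cancel hl] at this
    exact this.symm
  · rw [hdk']
    exact edgeVertex_ne_of_lt e (by omega) (by omega)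

theorem exists_map_edgeVertex (hf : GraphHomLocallySurjective f)
    (hint : ∀ x w, f (Sum.inr x) ≠ Sum.inl w) (d : G.Dart) {k : ℕ} (hk : 0 < k)
    (hkr : k ≤ r) :
    ∃ e l, 0 < l ∧ l ≤ k ∧ f (edgeVertex d k) = edgeVertex e l ∧
      f (edgeVertex d (k + 1)) = edgeVertex e (l + 1) := by
  induction hkr using Nat.decreasingInduction with
  | self =>
    obtain ⟨x, hx⟩ : ∃ x, f (edgeVertex d r) = Sum.inr x := by
      rcases hfd : f (edgeVertex d r) with w | x
      · exact absurd hfd (map_edgeVertex_ne_inl hint d hk le_rfl w)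
      · exact ⟨x, rfl⟩
    obtain ⟨e, l, hl, hlr, hel⟩ := exists_edgeVertex_eq x
    rw [← hel] at hx
    have hnext := hx ▸ f.map_adj (adj_edgeVertex_succ hk d le_rfl)
    rcases neighborSet_edgeVertex_subset hl hlr hnext with hprev | hnext
    · refine ⟨e.symm, r + 1 - l, by omega, by omega, ?_, ?_⟩
      · rw [hx, edgeVertex_symm e (by omega), Nat.sub_sub_self (by omega)]
      · rw [hprev, edgeVertex_symm e (by omega)]
        congr 1
        omega
    · exact ⟨e, l, hl, hlr, hx, hnext⟩
  | of_succ k hkr ih =>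
    obtain ⟨e, l, hl, hlk, hdk, hdk'⟩ := ih (by omega)
    have hprev := map_edgeVertex_sub_one (k := k + 1) hf (by omega) hkr hl (by omega) hdk hdk'
    rw [Nat.add_sub_cancel] at hprev
    have hl1 : 1 < l := by
      by_contra! hl1
      obtain rfl : l = 1 := by omega
      exact map_edgeVertex_ne_inl hint d hk hkr.le _ hprev
    refine ⟨e, l - 1, by omega, by omega, hprev, ?_⟩
    rwa [Nat.sub_add_cancel hl]

theorem exists_map_inl_fst_eq_inl (hf : GraphHomLocallySurjective f)
    (hint : ∀ x w, f (Sum.inr x) ≠ Sum.inl w) (hr : 0 < r) (d : G.Dart) :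
    ∃ w, f (Sum.inl d.fst) = Sum.inl w := by
  obtain ⟨e, l, hl, hl1, hd1, hd2⟩ := exists_map_edgeVertex hf hint d one_pos hr
  obtain rfl : l = 1 := by omega
  exact ⟨e.fst, map_edgeVertex_sub_one hf one_pos hr one_pos hr hd1 hd2⟩

theorem exists_map_inl_eq_inl (hf : GraphHomLocallySurjective f)
    (hint : ∀ x w, f (Sum.inr x) ≠ Sum.inl w) (u : V) : ∃ w, f (Sum.inl u) = Sum.inl w := by
  rcases hfu : f (Sum.inl u) with w | x
  · exact ⟨w, rfl⟩
  obtain ⟨e, l, hl, hlr, hel⟩ := exists_edgeVertex_eq x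
  have hadj : (Subdivision H r).Adj (f (Sum.inl u)) (edgeVertex e (l - 1)) := by
    have := adj_edgeVertex_succ (r := r) (by omega) e (k := l - 1) (by omega)
    rw [Nat.sub_add_cancel hl, hel, ← hfu] at this
    exact this.symm
  obtain ⟨p, hp, -⟩ := hf (Sum.inl u) hadj
  obtain ⟨d, rfl, -⟩ := exists_dart_of_adj_inl hp
  obtain ⟨w, hw⟩ := exists_map_inl_fst_eq_inl hf hint (by omega) d
  exact absurd (hfu.symm.trans hw) Sum.inr_ne_inl

end Subdivision

theorem encard_neighborSet_completeGraph {α : Type*} [Fintype α] (w : α) :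
    ((SimpleGraph.completeGraph α).neighborSet w).encard = (Fintype.card α - 1 : ℕ) := by
  classical
  rw [SimpleGraph.neighborSet_top, ← Finset.coe_singleton, ← Finset.coe_compl,
    Set.encard_coe_eq_coe_finsetCard, Finset.card_compl, Finset.card_singleton]

theorem statement6_general {V : Type*} (G : SimpleGraph V) (r : ℕ)
    (h : Subdivision G r →g Subdivision (SimpleGraph.completeGraph (Fin 4)) r)
    (hsurj : GraphHomLocallySurjective h) :
    ∀ v : SubdivVertex G r,
      (∃ w : Fin 4, h v = Sum.inl w) ↔ (∃ u : V, v = Sum.inl u) := by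
  have hint : ∀ x w, h (Sum.inr x) ≠ Sum.inl w := Subdivision.map_inr_ne_inl
    (fun w => (encard_neighborSet_completeGraph w).ge) hsurj
  rintro (u | x)
  · exact iff_of_true (Subdivision.exists_map_inl_eq_inl hsurj hint u) ⟨u, rfl⟩
  · exact iff_of_false (fun ⟨w, hw⟩ => hint x w hw) (fun ⟨u, hu⟩ => Sum.inr_ne_inl hu)

/-- Let `r ≥ 1`, let `G` be a connected subcubic graph with a vertex of degree
3, and let `h` be a locally surjective homomorphism from `G^r` to `K₄^r`.
Then `h v` is a branch vertex of `K₄^r` if and only if `v` is a branch vertex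
of `G^r`. -/
theorem statement6 {V : Type*} [Fintype V] (G : SimpleGraph V)
    [DecidableRel G.Adj] (r : ℕ) (hr : 1 ≤ r) (hconn : G.Connected)
    (hcubic : ∀ v : V, G.degree v ≤ 3) (hdeg3 : ∃ v : V, G.degree v = 3)
    (h : Subdivision G r →g Subdivision (SimpleGraph.completeGraph (Fin 4)) r)
    (hsurj : GraphHomLocallySurjective h) :
    ∀ v : SubdivVertex G r,
      (∃ w : Fin 4, h v = Sum.inl w) ↔ (∃ u : V, v = Sum.inl u) :=
  statement6_general G r h hsurj
end

section
/- For every simple graph G of pathwidth at most p and every integer k ≥ 1, the k-subdivision G^k has pathwidth at most p + 2. -/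
/-- A path decomposition of a graph `G`: a finite sequence of bags such that
every vertex appears in a nonempty contiguous interval of bags, and every edge
has both its endpoints together in some bag. -/
structure PathDecomposition {V : Type*} (G : SimpleGraph V) where
  /-- number of bags -/
  m : ℕ
  /-- the bags -/
  bags : Fin m → Set V
  mem_nonempty : ∀ v : V, ∃ i, v ∈ bags i
  mem_interval : ∀ (v : V) (i j l : Fin m),
    i ≤ j → j ≤ l → v ∈ bags i → v ∈ bags l → v ∈ bags j
  edge_mem : ∀ u v : V, G.Adj u v → ∃ i, u ∈ bags i ∧ v ∈ bags i

/-- `G` has pathwidth at most `p` if it has a path decomposition all of whose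
bags are finite of size at most `p + 1`. -/
def PathwidthLE {V : Type*} (G : SimpleGraph V) (p : ℕ) : Prop :=
  ∃ D : PathDecomposition G,
    ∀ i, (D.bags i).Finite ∧ (D.bags i).ncard ≤ p + 1

/-!
Let `(B_i)` be a path decomposition of `G` of width `p`, and assign every edge `uv` to a bag
`B_{a(uv)}` containing `u` and `v`. Orient every edge once. Replace each `B_i` by `B_i` followed by the
bags `B_i ∪ {w_j, w_{j+1}}`, where `uv` ranges over the edges assigned to `i` and `w_0, …, w_{k-1}` are
the internal vertices of its subdivision. Every internal vertex then lies in one or two consecutive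
bags, every edge of the path `u, w_0, …, w_{k-1}, v` lies in one of these bags, and each bag has at
most two vertices more than `B_i`.
-/

open SimpleGraph

theorem Prod.Lex.fst_eq_and_snd_le_of_le_of_le {α β : Type*} [PartialOrder α] [Preorder β]
    {x y z : α ×ₗ β} (hxy : x ≤ y) (hyz : y ≤ z) (hxz : (ofLex x).1 = (ofLex z).1) :
    (ofLex y).1 = (ofLex x).1 ∧ (ofLex x).2 ≤ (ofLex y).2 ∧ (ofLex y).2 ≤ (ofLex z).2 := by
  have h₁ := Prod.Lex.monotone_fst _ _ hxy
  have h₂ := Prod.Lex.monotone_fst _ _ hyz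
  have hy : (ofLex y).1 = (ofLex x).1 := le_antisymm (hxz ▸ h₂) h₁
  rcases Prod.Lex.le_iff.mp hxy with h | h
  · exact absurd hy h.ne'
  rcases Prod.Lex.le_iff.mp hyz with h' | h'
  · exact absurd (hy.trans hxz) h'.ne
  exact ⟨hy, h.2, h'.2⟩

namespace PathwidthLE

variable {V : Type*} {G : SimpleGraph V} {p : ℕ}

theorem finite (h : PathwidthLE G p) : Finite V := by
  obtain ⟨D, hD⟩ := h
  refine Set.finite_univ_iff.mp ((Set.finite_iUnion fun i => (hD i).1).subset fun v _ => ?_)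
  obtain ⟨i, hi⟩ := D.mem_nonempty v
  exact Set.mem_iUnion.mpr ⟨i, hi⟩

theorem of_linearOrder {ι : Type*} [LinearOrder ι] [Fintype ι] (bags : ι → Set V)
    (mem_nonempty : ∀ v, ∃ i, v ∈ bags i)
    (mem_interval : ∀ v i j l, i ≤ j → j ≤ l → v ∈ bags i → v ∈ bags l → v ∈ bags j)
    (edge_mem : ∀ u v, G.Adj u v → ∃ i, u ∈ bags i ∧ v ∈ bags i)
    (bags_le : ∀ i, (bags i).Finite ∧ (bags i).ncard ≤ p + 1) : PathwidthLE G p := by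
  let e := Fintype.orderIsoFinOfCardEq ι rfl
  refine ⟨⟨Fintype.card ι, bags ∘ e, fun v => ?_, fun v i j l hij hjl => ?_, fun u v huv => ?_⟩,
    fun i => bags_le (e i)⟩
  · obtain ⟨i, hi⟩ := mem_nonempty v
    exact ⟨e.symm i, by simpa using hi⟩
  · exact mem_interval v _ _ _ (e.monotone hij) (e.monotone hjl)
  · obtain ⟨i, hi⟩ := edge_mem u v huv
    exact ⟨e.symm i, by simpa using hi⟩

end PathwidthLE

namespace Subdivision

variable {V : Type*} {G : SimpleGraph V} {k : ℕ}

theorem mk_eq_mk_iff_s8 {x y : G.Dart × Fin k} :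
    Quot.mk (SubdivRep G k) x = Quot.mk (SubdivRep G k) y ↔ x = y ∨ SubdivRep G k x y := by
  have hequiv : Equivalence (fun x y : G.Dart × Fin k => x = y ∨ SubdivRep G k x y) := by
    refine ⟨fun _ => .inl rfl, ?_, ?_⟩
    · rintro x y (rfl | ⟨h₁, h₂⟩)
      · exact .inl rfl
      · exact .inr ⟨by simp [h₁], by omega⟩
    · rintro x y z (rfl | ⟨h₁, h₂⟩) (rfl | ⟨h₃, h₄⟩)
      · exact .inl rfl
      · exact .inr ⟨h₃, h₄⟩
      · exact .inr ⟨h₁, h₂⟩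
      · exact .inl (Prod.ext (by simp [h₃, h₁]) (Fin.ext (by omega)))
  refine ⟨fun h => ?_, ?_⟩
  · exact hequiv.eqvGen_iff.mp (Relation.EqvGen.mono (fun _ _ => .inr) _ _ (Quot.eq.mp h))
  · rintro (rfl | h)
    exacts [rfl, Quot.sound h]

theorem mk_eq_mk_symm_rev (d : G.Dart) (t : Fin k) :
    Quot.mk (SubdivRep G k) (d, t) = Quot.mk (SubdivRep G k) (d.symm, t.rev) :=
  Quot.sound ⟨rfl, by simp only [Fin.val_rev]; omega⟩

variable [LinearOrder G.Dart]

theorem lt_symm_or_symm_lt_symm (d : G.Dart) : d < d.symm ∨ d.symm < d.symm.symm := by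
  rw [Dart.symm_symm]
  exact lt_or_gt_of_ne d.symm_ne.symm

theorem exists_lt_symm_mk_eq (x : SubdivInternal G k) :
    ∃ d t, d < d.symm ∧ x = Quot.mk (SubdivRep G k) (d, t) := by
  obtain ⟨⟨d, t⟩, rfl⟩ := Quot.exists_rep x
  rcases lt_symm_or_symm_lt_symm d with hd | hd
  · exact ⟨d, t, hd, rfl⟩
  · exact ⟨d.symm, t.rev, hd, mk_eq_mk_symm_rev d t⟩

theorem eq_and_eq_of_mk_eq_mk {d d' : G.Dart} {t t' : Fin k} (hd : d < d.symm) (hd' : d' < d'.symm)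
    (h : Quot.mk (SubdivRep G k) (d, t) = Quot.mk (SubdivRep G k) (d', t')) : d = d' ∧ t = t' := by
  rcases mk_eq_mk_iff_s8.mp h with h | ⟨rfl, -⟩
  · exact Prod.ext_iff.mp h
  · exact absurd hd (by simpa using hd'.le.not_gt)

section Bags

variable (D : PathDecomposition G) (a : G.Dart → Fin D.m)

/-- The bag with index `(i, e, j)`, ordered lexicographically: `D.bags i` together with the
internal vertices `w_j, w_{j+1}` of `e` when `e` is a dart with `e < e.symm` assigned to `i` by `a`.
The slot `e = ⊥` keeps `D.bags i` even when `G` has no edges. -/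
def bag (x : (Fin D.m ×ₗ WithBot G.Dart) ×ₗ Fin k) : Set (SubdivVertex G k) :=
  Sum.inl '' D.bags (ofLex (ofLex x).1).1 ∪
    Sum.inr '' (Quot.mk (SubdivRep G k) ''
      {p | p.1 < p.1.symm ∧ (ofLex x).1 = toLex (a p.1, ↑p.1) ∧
        ((p.2 : ℕ) = (ofLex x).2 ∨ (p.2 : ℕ) = (ofLex x).2 + 1)})

variable {D a}

@[simp]
theorem inl_mem_bag {x : (Fin D.m ×ₗ WithBot G.Dart) ×ₗ Fin k} {u : V} :
    Sum.inl u ∈ bag D a x ↔ u ∈ D.bags (ofLex (ofLex x).1).1 := by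
  simp [bag]

theorem inr_mem_bag {x : (Fin D.m ×ₗ WithBot G.Dart) ×ₗ Fin k} {w : SubdivInternal G k} :
    Sum.inr w ∈ bag D a x ↔ ∃ d, ∃ t : Fin k, (d < d.symm ∧ (ofLex x).1 = toLex (a d, ↑d) ∧
      ((t : ℕ) = (ofLex x).2 ∨ (t : ℕ) = (ofLex x).2 + 1)) ∧
        w = Quot.mk (SubdivRep G k) (d, t) := by
  simp [bag, eq_comm (b := w)]

theorem bag_finite_and_ncard_le {p : ℕ} (hD : ∀ i, (D.bags i).Finite ∧ (D.bags i).ncard ≤ p + 1)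
    (x : (Fin D.m ×ₗ WithBot G.Dart) ×ₗ Fin k) :
    (bag D a x).Finite ∧ (bag D a x).ncard ≤ p + 3 := by
  set P := {p : G.Dart × Fin k | p.1 < p.1.symm ∧ (ofLex x).1 = toLex (a p.1, ↑p.1) ∧
    ((p.2 : ℕ) = (ofLex x).2 ∨ (p.2 : ℕ) = (ofLex x).2 + 1)}
  obtain ⟨hfin, hcard⟩ := hD (ofLex (ofLex x).1).1
  -- the dart is pinned down by the middle index, the position by the last one up to `+ 1`
  let f := fun p : G.Dart × Fin k => ((p.1 : WithBot G.Dart), (p.2 : ℕ))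
  have hf : f.Injective := WithBot.coe_injective.prodMap Fin.val_injective
  have hmaps : Set.MapsTo f P {((ofLex (ofLex x).1).2, ((ofLex x).2 : ℕ)),
      ((ofLex (ofLex x).1).2, ((ofLex x).2 : ℕ) + 1)} := by
    rintro ⟨d, t⟩ ⟨-, hx, ht⟩
    dsimp only at hx ht
    rcases ht with ht | ht <;> simp [f, hx, ht]
  have hPfin : P.Finite := ((Set.toFinite _).subset hmaps.image_subset).of_finite_image hf.injOn
  have hPcard : P.ncard ≤ 2 :=
    (Set.ncard_le_ncard_of_injOn f hmaps hf.injOn (Set.toFinite _)).trans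
      ((Set.ncard_insert_le _ _).trans (by simp))
  refine ⟨(hfin.image _).union ((hPfin.image _).image _), ?_⟩
  calc (bag D a x).ncard
      ≤ (D.bags (ofLex (ofLex x).1).1).ncard + (Quot.mk (SubdivRep G k) '' P).ncard := by
        refine (Set.ncard_union_le _ _).trans_eq ?_
        rw [Set.ncard_image_of_injective _ Sum.inl_injective,
          Set.ncard_image_of_injective _ Sum.inr_injective]
    _ ≤ (p + 1) + 2 := add_le_add hcard ((Set.ncard_image_le hPfin).trans hPcard)

theorem mem_bag_of_le_of_le {v : SubdivVertex G k} {x y z : (Fin D.m ×ₗ WithBot G.Dart) ×ₗ Fin k}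
    (hxy : x ≤ y) (hyz : y ≤ z) (hx : v ∈ bag D a x) (hz : v ∈ bag D a z) : v ∈ bag D a y := by
  rcases v with u | w
  · have hmono : Monotone fun x : (Fin D.m ×ₗ WithBot G.Dart) ×ₗ Fin k => (ofLex (ofLex x).1).1 :=
      Prod.Lex.monotone_fst_ofLex.comp Prod.Lex.monotone_fst_ofLex
    rw [inl_mem_bag] at hx hz ⊢
    exact D.mem_interval u _ _ _ (hmono hxy) (hmono hyz) hx hz
  · obtain ⟨d, t, ⟨hd, hxd, hxt⟩, rfl⟩ := inr_mem_bag.mp hx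
    obtain ⟨d', t', ⟨hd', hzd, hzt⟩, hdt⟩ := inr_mem_bag.mp hz
    obtain ⟨rfl, rfl⟩ := eq_and_eq_of_mk_eq_mk hd' hd hdt.symm
    obtain ⟨hyx, hxy', hyz'⟩ :=
      Prod.Lex.fst_eq_and_snd_le_of_le_of_le hxy hyz (hxd.trans hzd.symm)
    rw [Fin.le_def] at hxy' hyz'
    exact inr_mem_bag.mpr ⟨d', t', ⟨hd', hyx.trans hxd, by omega⟩, rfl⟩

theorem exists_bag_of_lt_symm (ha : ∀ d, d.fst ∈ D.bags (a d) ∧ d.snd ∈ D.bags (a d))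
    {d : G.Dart} (hd : d < d.symm) (t : Fin k) :
    ∃ x, (Sum.inl d.fst ∈ bag D a x ∧ Sum.inl d.snd ∈ bag D a x) ∧
      ∀ t' : Fin k, ((t' : ℕ) = t ∨ (t' : ℕ) = t + 1) →
        Sum.inr (Quot.mk (SubdivRep G k) (d, t')) ∈ bag D a x := by
  refine ⟨toLex (toLex (a d, ↑d), t), by simpa using ha d, fun t' ht' => ?_⟩
  exact inr_mem_bag.mpr ⟨d, t', ⟨hd, rfl, ht'⟩, rfl⟩

theorem exists_mem_bag (hk : 1 ≤ k) (ha : ∀ d, d.fst ∈ D.bags (a d) ∧ d.snd ∈ D.bags (a d))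
    (v : SubdivVertex G k) : ∃ x, v ∈ bag D a x := by
  rcases v with u | w
  · obtain ⟨i, hi⟩ := D.mem_nonempty u
    exact ⟨toLex (toLex (i, ⊥), ⟨0, hk⟩), by simpa using hi⟩
  · obtain ⟨d, t, hd, rfl⟩ := exists_lt_symm_mk_eq w
    obtain ⟨x, -, hmem⟩ := exists_bag_of_lt_symm ha hd t
    exact ⟨x, hmem t (.inl rfl)⟩

theorem exists_mem_bag_of_subdivAdjBase (ha : ∀ d, d.fst ∈ D.bags (a d) ∧ d.snd ∈ D.bags (a d))
    {v w : SubdivVertex G k} (h : SubdivAdjBase G k v w) :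
    ∃ x, v ∈ bag D a x ∧ w ∈ bag D a x := by
  rcases v with u | v <;> rcases w with _ | w
  · exact h.elim
  · obtain ⟨d, i, -, rfl, rfl⟩ := h
    rcases lt_symm_or_symm_lt_symm d with hd | hd
    · obtain ⟨x, ⟨hfst, -⟩, hmem⟩ := exists_bag_of_lt_symm ha hd i
      exact ⟨x, hfst, hmem i (.inl rfl)⟩
    · obtain ⟨x, ⟨-, hsnd⟩, hmem⟩ := exists_bag_of_lt_symm ha hd i.rev
      rw [mk_eq_mk_symm_rev]
      exact ⟨x, hsnd, hmem i.rev (.inl rfl)⟩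
  · exact h.elim
  · obtain ⟨d, i, j, hij, rfl, rfl⟩ := h
    rcases lt_symm_or_symm_lt_symm d with hd | hd
    · obtain ⟨x, -, hmem⟩ := exists_bag_of_lt_symm ha hd i
      exact ⟨x, hmem i (.inl rfl), hmem j (.inr hij)⟩
    · obtain ⟨x, -, hmem⟩ := exists_bag_of_lt_symm ha hd j.rev
      rw [mk_eq_mk_symm_rev d i, mk_eq_mk_symm_rev d j]
      refine ⟨x, hmem i.rev (.inr ?_), hmem j.rev (.inl rfl)⟩
      simp only [Fin.val_rev]
      omega

end Bags

end Subdivision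

open Subdivision in
/-- If `G` has pathwidth at most `p`, then for every `k ≥ 1` its
`k`-subdivision `G^k` has pathwidth at most `p + 2`. -/
theorem statement8 {V : Type*} (G : SimpleGraph V) (p : ℕ)
    (hG : PathwidthLE G p) (k : ℕ) (hk : 1 ≤ k) :
    PathwidthLE (Subdivision G k) (p + 2) := by
  have : Finite V := hG.finite
  have : Finite G.Dart := Finite.of_injective _ Dart.toProd_injective
  have := Fintype.ofFinite G.Dart
  let _ : LinearOrder G.Dart := WellOrderingRel.isWellOrder.linearOrder
  obtain ⟨D, hD⟩ := hG
  choose a ha using fun d : G.Dart => D.edge_mem d.fst d.snd d.adj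
  refine PathwidthLE.of_linearOrder (bag D a) (exists_mem_bag hk ha)
    (fun _ _ _ _ => mem_bag_of_le_of_le) (fun v w h => ?_) (bag_finite_and_ncard_le hD)
  rcases h.2 with h | h
  · exact exists_mem_bag_of_subdivAdjBase ha h
  · exact (exists_mem_bag_of_subdivAdjBase ha h).imp fun _ => And.symm
end

section
/- Let k ≥ 3 and let b_1, …, b_k be booleans. There exist booleans q_1, …, q_{k−2} such that NAE(b_1, b_2, q_1) holds, NAE(¬q_{j−1}, b_{j+1}, q_j) holds for every j with 2 ≤ j ≤ k − 2, and NAE(¬q_{k−2}, b_k, false) holds, if and only if at least one of b_1, …, b_k is true. -/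
/-- `NAE x y z` holds iff the booleans `x`, `y`, `z` are not all equal. -/
def NAE (x y z : Bool) : Prop := ¬(x = y ∧ y = z)

/-- Let `k ≥ 3` and let `b 1, …, b k` be booleans.  There exist booleans
`q 1, …, q (k-2)` such that `NAE (b 1) (b 2) (q 1)`,
`NAE (¬ q (j-1)) (b (j+1)) (q j)` for all `2 ≤ j ≤ k - 2`, and
`NAE (¬ q (k-2)) (b k) false`, if and only if at least one of
`b 1, …, b k` is true. -/
theorem statement9 (k : ℕ) (hk : 3 ≤ k) (b : ℕ → Bool) :
    (∃ q : ℕ → Bool,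
      NAE (b 1) (b 2) (q 1) ∧
      (∀ j : ℕ, 2 ≤ j → j ≤ k - 2 → NAE (!(q (j - 1))) (b (j + 1)) (q j)) ∧
      NAE (!(q (k - 2))) (b k) false) ↔
    ∃ i : ℕ, 1 ≤ i ∧ i ≤ k ∧ b i = true := by
  constructor
  · rintro ⟨q, h1, h2, h3⟩
    by_contra hno
    push_neg at hno
    have hb : ∀ i, 1 ≤ i → i ≤ k → b i = false := by
      intro i hi hik
      simpa using hno i hi hik
    have key : ∀ j, 1 ≤ j → j ≤ k - 2 → q j = true := by
      intro j
      induction j with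
      | zero => omega
      | succ n ih =>
        intro _ hj
        rcases Nat.eq_zero_or_pos n with hn | hn
        · subst hn
          have hb1 : b 1 = false := hb 1 (by omega) (by omega)
          have hb2 : b 2 = false := hb 2 (by omega) (by omega)
          unfold NAE at h1
          rw [hb1, hb2] at h1
          cases hq : q 1 with
          | true => rfl
          | false => exact absurd ⟨rfl, hq.symm⟩ h1
        · have hqn : q n = true := ih hn (by omega)
          have hbn : b (n + 2) = false := hb (n + 2) (by omega) (by omega)
          have := h2 (n + 1) (by omega) hj
          unfold NAE at this
          simp only [Nat.add_sub_cancel, hqn, Bool.not_true] at this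
          rw [show n + 1 + 1 = n + 2 from rfl, hbn] at this
          cases hq : q (n + 1) with
          | true => rfl
          | false => exact absurd ⟨rfl, hq.symm⟩ this
    have hqk : q (k - 2) = true := key (k - 2) (by omega) le_rfl
    have hbk : b k = false := hb k (by omega) le_rfl
    unfold NAE at h3
    rw [hqk, hbk] at h3
    exact h3 ⟨rfl, rfl⟩
  · rintro ⟨i, hi1, hik, hbi⟩
    set P : ℕ → Bool := fun j => (List.range (j + 1)).any (fun m => b (m + 1)) with hP
    have hPiff : ∀ j, P j = true ↔ ∃ m, 1 ≤ m ∧ m ≤ j + 1 ∧ b m = true := by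
      intro j
      simp only [hP, List.any_eq_true, List.mem_range]
      constructor
      · rintro ⟨m, hm, hbm⟩
        exact ⟨m + 1, by omega, by omega, hbm⟩
      · rintro ⟨m, hm1, hm2, hbm⟩
        exact ⟨m - 1, by omega, by rw [show m - 1 + 1 = m by omega]; exact hbm⟩
    have hPsucc : ∀ j, P (j + 1) = (P j || b (j + 2)) := by
      intro j
      simp [hP, List.range_succ]
    refine ⟨fun j => !(P j), ?_, ?_, ?_⟩
    · have h1 : P 1 = (b 1 || b 2) := by
        simp [hP, List.range_succ]
      unfold NAE
      show ¬(b 1 = b 2 ∧ b 2 = !P 1)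
      rw [h1]
      cases b 1 <;> cases b 2 <;> simp
    · intro j hj2 hjk
      unfold NAE
      show ¬((!!P (j - 1)) = b (j + 1) ∧ b (j + 1) = !P j)
      have hjeq : j - 1 + 1 = j := by omega
      have : P j = (P (j - 1) || b (j + 1)) := by
        have := hPsucc (j - 1)
        rw [hjeq] at this
        rw [this, show j - 1 + 2 = j + 1 by omega]
      rw [this, Bool.not_not]
      cases P (j - 1) <;> cases b (j + 1) <;> simp
    · unfold NAE
      show ¬((!!P (k - 2)) = b k ∧ b k = false)
      rw [Bool.not_not]
      rintro ⟨hPb, hbf⟩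
      have hik' : i ≤ k - 1 := by
        rcases Nat.lt_or_ge i k with h | h
        · omega
        · have : i = k := by omega
          rw [this, hbf] at hbi; exact absurd hbi (by simp)
      have : P (k - 2) = true := (hPiff (k - 2)).2 ⟨i, hi1, by omega, hbi⟩
      rw [hPb, hbf] at this
      exact absurd this (by simp)
end
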